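/- arXiv:1903.07244 — 5 statements merged into one kernel-verified Lean document; each statement's English description precedes it below -/
import Mathlib

section
/- For every L > 0 and every ε > 0 there exists a constant M > 0 such that for every twice continuously differentiable function w on [0,L] with w(0) = 0 one has ∫₀^L w(x)² dx ≤ ε·[ ∫₀^L w''(x)² dx + ( ∫₀^L w'(x)² dx )² ] + M. -/
/-!
Since `w 0 = 0`, Cauchy–Schwarz gives `w x ^ 2 ≤ L * ∫ (w') ^ 2` on `[0, L]`, hence the Poincaré
inequality `∫ w ^ 2 ≤ L ^ 2 * ∫ (w') ^ 2`. Young's inequality turns `L ^ 2 * A` into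
`ε * A ^ 2 + L ^ 4 / (4 * ε)`, and the `w''` term is nonnegative, so `M = L ^ 4 / (4 * ε)` works.
-/

open MeasureTheory intervalIntegral

section

variable {f : ℝ → ℝ} {a b : ℝ}

theorem sq_integral_le_mul_integral_sq (hab : a ≤ b)
    (hf : IntervalIntegrable f volume a b) (hf2 : IntervalIntegrable (fun x => f x ^ 2) volume a b) :
    (∫ x in a..b, f x) ^ 2 ≤ (b - a) * ∫ x in a..b, f x ^ 2 := by
  rcases hab.eq_or_lt with rfl | hlt
  · simp
  set I := ∫ x in a..b, f x
  set A := ∫ x in a..b, f x ^ 2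
  -- AM-GM `2ℓIf ≤ ℓ²f² + I²` with `ℓ = b - a`, integrated over `[a, b]`
  have h : (b - a) * I ^ 2 ≤ (b - a) * ((b - a) * A) := by
    have hmono := integral_mono_on hab (hf.const_mul (2 * (b - a) * I))
      ((hf2.const_mul ((b - a) ^ 2)).add (intervalIntegrable_const (c := I ^ 2)))
      fun x _ => by nlinarith [sq_nonneg ((b - a) * f x - I)]
    rw [intervalIntegral.integral_const_mul, integral_add (hf2.const_mul _) intervalIntegrable_const,
      intervalIntegral.integral_const_mul, intervalIntegral.integral_const, smul_eq_mul] at hmono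
    nlinarith
  exact le_of_mul_le_mul_left h (sub_pos.2 hlt)

theorem sq_sub_le_mul_integral_deriv_sq {x : ℝ} (hf : ContDiff ℝ 1 f) (hx : x ∈ Set.Icc a b) :
    (f x - f a) ^ 2 ≤ (b - a) * ∫ t in a..b, deriv f t ^ 2 := by
  have hdf : Continuous (deriv f) := hf.continuous_deriv le_rfl
  have hftc : ∫ t in a..x, deriv f t = f x - f a :=
    integral_deriv_eq_sub (fun t _ => hf.differentiable one_ne_zero t) (hdf.intervalIntegrable a x)
  calc (f x - f a) ^ 2 = (∫ t in a..x, deriv f t) ^ 2 := by rw [hftc]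
    _ ≤ (x - a) * ∫ t in a..x, deriv f t ^ 2 :=
      sq_integral_le_mul_integral_sq hx.1 (hdf.intervalIntegrable a x)
        ((hdf.pow 2).intervalIntegrable a x)
    _ ≤ (b - a) * ∫ t in a..b, deriv f t ^ 2 := by
      refine mul_le_mul (by linarith [hx.2]) ?_
        (intervalIntegral.integral_nonneg hx.1 fun _ _ => sq_nonneg _) (by linarith [hx.1, hx.2])
      exact integral_mono_interval le_rfl hx.1 hx.2
        (Filter.Eventually.of_forall fun _ => sq_nonneg _) ((hdf.pow 2).intervalIntegrable a b)

theorem integral_sq_le_sq_mul_integral_deriv_sq (hf : ContDiff ℝ 1 f)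
    (hab : a ≤ b) (ha : f a = 0) :
    ∫ x in a..b, f x ^ 2 ≤ (b - a) ^ 2 * ∫ x in a..b, deriv f x ^ 2 := by
  have hbound : ∀ x ∈ Set.Icc a b, f x ^ 2 ≤ (b - a) * ∫ t in a..b, deriv f t ^ 2 := fun x hx => by
    simpa [ha] using sq_sub_le_mul_integral_deriv_sq hf hx
  calc ∫ x in a..b, f x ^ 2 ≤ ∫ _ in a..b, (b - a) * ∫ t in a..b, deriv f t ^ 2 :=
        integral_mono_on hab ((hf.continuous.pow 2).intervalIntegrable a b)
          intervalIntegrable_const hbound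
    _ = (b - a) ^ 2 * ∫ x in a..b, deriv f x ^ 2 := by
      rw [intervalIntegral.integral_const, smul_eq_mul]; ring

end

theorem mul_le_mul_sq_add_sq_div {ε : ℝ} (hε : 0 < ε) (x y : ℝ) :
    x * y ≤ ε * y ^ 2 + x ^ 2 / (4 * ε) := by
  have h : 0 ≤ (ε * y - x / 2) ^ 2 / ε := by positivity
  have e : (ε * y - x / 2) ^ 2 / ε = ε * y ^ 2 - x * y + x ^ 2 / (4 * ε) := by
    field_simp; ring
  linarith

/-- Lower-order estimate: for every `L > 0` and `ε > 0` there is `M > 0` such that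
every `C²` function `w` with `w 0 = 0` satisfies
`∫₀^L w² ≤ ε·(∫₀^L (w'')² + (∫₀^L (w')²)²) + M`. -/
theorem lower_order_estimate (L : ℝ) (hL : 0 < L) (ε : ℝ) (hε : 0 < ε) :
    ∃ M : ℝ, 0 < M ∧
      ∀ w : ℝ → ℝ, ContDiff ℝ 2 w → w 0 = 0 →
        (∫ x in (0:ℝ)..L, (w x) ^ 2)
          ≤ ε * ((∫ x in (0:ℝ)..L, (deriv (deriv w) x) ^ 2)
              + (∫ x in (0:ℝ)..L, (deriv w x) ^ 2) ^ 2) + M := by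
  refine ⟨L ^ 4 / (4 * ε), by positivity, fun w hw hw0 => ?_⟩
  have hpoincare := integral_sq_le_sq_mul_integral_deriv_sq (hw.of_le one_le_two) hL.le hw0
  have hyoung := mul_le_mul_sq_add_sq_div hε (L ^ 2) (∫ x in (0:ℝ)..L, deriv w x ^ 2)
  have hw'' : 0 ≤ ∫ x in (0:ℝ)..L, deriv (deriv w) x ^ 2 :=
    intervalIntegral.integral_nonneg hL.le fun _ _ => sq_nonneg _
  rw [sub_zero] at hpoincare
  rw [← pow_mul] at hyoung
  linarith [mul_nonneg hε.le hw'']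
end

section
/- Let L > 0, D > 0, k₀ ≥ 0, k₁ ≥ 0, α ≥ 0, β ≥ 0, U ≥ 0, let p₀ be continuous on [0,L], and let w(t,x) be a smooth real-valued function on [0,∞) × [0,L] satisfying, for all t ≥ 0 and x ∈ [0,L], the linear cantilever equation w_tt − α w_ttxx + D w_xxxx + k₀ w_t − k₁ w_txx = p₀(x) − β(w_t + U w_x), together with the boundary conditions w(t,0) = w_x(t,0) = 0, w_xx(t,L) = 0 and −α w_ttx(t,L) + D w_xxx(t,L) − k₁ w_tx(t,L) = 0 for all t ≥ 0. Define E_α(t) = (1/2)(D‖w_xx(t,·)‖² + ‖w_t(t,·)‖² + α‖w_tx(t,·)‖²). Then for all t ≥ 0: E_α(t) + ∫₀ᵗ [ (k₀+β)‖w_t(τ,·)‖² + k₁‖w_tx(τ,·)‖² ] dτ = E_α(0) + ∫₀ᵗ ∫₀^L p₀(x) w_t(τ,x) dx dτ − βU ∫₀ᵗ ∫₀^L w_x(τ,x) w_t(τ,x) dx dτ. -/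
open MeasureTheory intervalIntegral

/-- Partial derivative in time of `w(t,x)`. -/
noncomputable def pt (w : ℝ → ℝ → ℝ) : ℝ → ℝ → ℝ := fun t x => deriv (fun s => w s x) t

/-- Partial derivative in space of `w(t,x)`. -/
noncomputable def px (w : ℝ → ℝ → ℝ) : ℝ → ℝ → ℝ := fun t x => deriv (fun y => w t y) x

namespace CLAux

open Set Function

noncomputable def pd (v : ℝ × ℝ) (F : ℝ × ℝ → ℝ) : ℝ × ℝ → ℝ := fun p => fderiv ℝ F p v

lemma pd_smooth {F : ℝ × ℝ → ℝ} (hF : ContDiff ℝ (⊤ : ℕ∞) F) (v : ℝ × ℝ) :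
    ContDiff ℝ (⊤ : ℕ∞) (pd v F) := by
  have h1 : ContDiff ℝ (⊤ : ℕ∞) (fderiv ℝ F) := hF.fderiv_right (by simp)
  exact (ContinuousLinearMap.apply ℝ ℝ v).contDiff.comp h1

lemma hasDerivAt_fst {t x : ℝ} {F : ℝ × ℝ → ℝ} (hF : DifferentiableAt ℝ F (t, x)) :
    HasDerivAt (fun s => F (s, x)) (fderiv ℝ F (t, x) (1, 0)) t := by
  have h := hF.hasFDerivAt.comp_hasDerivAt t
    ((hasDerivAt_id t).prodMk (hasDerivAt_const t x))
  simp at h; exact h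

lemma hasDerivAt_snd {t x : ℝ} {F : ℝ × ℝ → ℝ} (hF : DifferentiableAt ℝ F (t, x)) :
    HasDerivAt (fun y => F (t, y)) (fderiv ℝ F (t, x) (0, 1)) x := by
  have h := hF.hasFDerivAt.comp_hasDerivAt x
    ((hasDerivAt_const x t).prodMk (hasDerivAt_id x))
  exact h

lemma pt_eq {w : ℝ → ℝ → ℝ} (hw : ContDiff ℝ (⊤ : ℕ∞) (uncurry w)) :
    uncurry (pt w) = pd (1, 0) (uncurry w) := by
  funext p
  obtain ⟨t, x⟩ := p
  exact (hasDerivAt_fst ((hw.differentiable (by simp)) (t, x))).deriv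

lemma px_eq {w : ℝ → ℝ → ℝ} (hw : ContDiff ℝ (⊤ : ℕ∞) (uncurry w)) :
    uncurry (px w) = pd (0, 1) (uncurry w) := by
  funext p
  obtain ⟨t, x⟩ := p
  exact (hasDerivAt_snd ((hw.differentiable (by simp)) (t, x))).deriv

lemma pt_smooth {w : ℝ → ℝ → ℝ} (hw : ContDiff ℝ (⊤ : ℕ∞) (uncurry w)) :
    ContDiff ℝ (⊤ : ℕ∞) (uncurry (pt w)) := by rw [pt_eq hw]; exact pd_smooth hw _

lemma px_smooth {w : ℝ → ℝ → ℝ} (hw : ContDiff ℝ (⊤ : ℕ∞) (uncurry w)) :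
    ContDiff ℝ (⊤ : ℕ∞) (uncurry (px w)) := by rw [px_eq hw]; exact pd_smooth hw _

lemma pd_pd {F : ℝ × ℝ → ℝ} (hF : ContDiff ℝ (⊤ : ℕ∞) F) (u v : ℝ × ℝ) (p : ℝ × ℝ) :
    pd u (pd v F) p = fderiv ℝ (fderiv ℝ F) p u v := by
  have h1 : ContDiff ℝ (⊤ : ℕ∞) (fderiv ℝ F) := hF.fderiv_right (by simp)
  have h2 : HasFDerivAt (fun q => (ContinuousLinearMap.apply ℝ ℝ v) (fderiv ℝ F q))
      ((ContinuousLinearMap.apply ℝ ℝ v).comp (fderiv ℝ (fderiv ℝ F) p)) p :=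
    (ContinuousLinearMap.apply ℝ ℝ v).hasFDerivAt.comp p
      (h1.differentiable (by simp) p).hasFDerivAt
  have e : pd v F = fun q => (ContinuousLinearMap.apply ℝ ℝ v) (fderiv ℝ F q) := rfl
  have : pd u (pd v F) p
      = ((ContinuousLinearMap.apply ℝ ℝ v).comp (fderiv ℝ (fderiv ℝ F) p)) u := by
    simp only [pd, e]
    rw [h2.fderiv]
  simpa using this

lemma pd_comm {F : ℝ × ℝ → ℝ} (hF : ContDiff ℝ (⊤ : ℕ∞) F) (u v : ℝ × ℝ) :
    pd u (pd v F) = pd v (pd u F) := by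
  funext p
  rw [pd_pd hF, pd_pd hF]
  exact second_derivative_symmetric
    (fun y => ((hF.differentiable (by simp)) y).hasFDerivAt)
    (((hF.fderiv_right (m := (⊤ : ℕ∞)) (by simp)).differentiable (by simp)) p).hasFDerivAt u v

lemma ptpx_comm {w : ℝ → ℝ → ℝ} (hw : ContDiff ℝ (⊤ : ℕ∞) (uncurry w)) :
    pt (px w) = px (pt w) := by
  have h : uncurry (pt (px w)) = uncurry (px (pt w)) := by
    rw [pt_eq (px_smooth hw), px_eq hw, px_eq (pt_smooth hw), pt_eq hw, pd_comm hw]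
  funext t x
  exact congrFun h (t, x)

lemma hasDerivAt_t {w : ℝ → ℝ → ℝ} (hw : ContDiff ℝ (⊤ : ℕ∞) (uncurry w)) (t x : ℝ) :
    HasDerivAt (fun s => w s x) (pt w t x) t := by
  have h := hasDerivAt_fst ((hw.differentiable (by simp)) (t, x))
  exact h.differentiableAt.hasDerivAt

lemma hasDerivAt_x {w : ℝ → ℝ → ℝ} (hw : ContDiff ℝ (⊤ : ℕ∞) (uncurry w)) (t x : ℝ) :
    HasDerivAt (fun y => w t y) (px w t x) x := by
  have h := hasDerivAt_snd ((hw.differentiable (by simp)) (t, x))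
  exact h.differentiableAt.hasDerivAt

lemma cont_slice {w : ℝ → ℝ → ℝ} (hw : ContDiff ℝ (⊤ : ℕ∞) (uncurry w)) (t : ℝ) :
    Continuous (fun x => w t x) :=
  hw.continuous.comp (Continuous.prodMk_right t)

lemma hasDerivAt_param_integral {F : ℝ → ℝ → ℝ} (hF : ContDiff ℝ (⊤ : ℕ∞) (uncurry F))
    (a b t₀ : ℝ) :
    HasDerivAt (fun t => ∫ x in a..b, F t x) (∫ x in a..b, pt F t₀ x) t₀ := by
  obtain ⟨C, hC⟩ : ∃ C, ∀ p ∈ Metric.closedBall t₀ 1 ×ˢ uIcc a b, ‖uncurry (pt F) p‖ ≤ C :=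
    ((isCompact_closedBall t₀ 1).prod isCompact_uIcc).exists_bound_of_continuousOn
      ((pt_smooth hF).continuous.continuousOn)
  refine (intervalIntegral.hasDerivAt_integral_of_dominated_loc_of_deriv_le
    (F := fun t x => F t x) (F' := fun t x => pt F t x) (bound := fun _ => C)
    (Metric.ball_mem_nhds t₀ one_pos) ?_ ?_ ?_ ?_ ?_ ?_).2
  · exact Filter.Eventually.of_forall fun t => (cont_slice hF t).aestronglyMeasurable
  · exact (cont_slice hF t₀).intervalIntegrable a b
  · exact (cont_slice (pt_smooth hF) t₀).aestronglyMeasurable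
  · exact Filter.Eventually.of_forall fun x hx t ht =>
      hC (t, x) ⟨Metric.ball_subset_closedBall ht, Set.uIoc_subset_uIcc hx⟩
  · exact intervalIntegrable_const
  · exact Filter.Eventually.of_forall fun x _ t _ => hasDerivAt_t hF t x

lemma hasDerivAt_sq_integral {g : ℝ → ℝ → ℝ} (hg : ContDiff ℝ (⊤ : ℕ∞) (uncurry g)) (a b t₀ : ℝ) :
    HasDerivAt (fun t => ∫ x in a..b, (g t x) ^ 2)
      (2 * ∫ x in a..b, g t₀ x * pt g t₀ x) t₀ := by
  have hsq : ContDiff ℝ (⊤ : ℕ∞) (uncurry (fun t x => (g t x) ^ 2)) := by exact hg.pow 2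
  have h := hasDerivAt_param_integral hsq a b t₀
  have hpt : ∀ x, pt (fun t x => (g t x) ^ 2) t₀ x = 2 * (g t₀ x * pt g t₀ x) := by
    intro x
    have h2 := ((hasDerivAt_t hg t₀ x).pow 2).deriv
    show deriv (fun s => (g s x) ^ 2) t₀ = _
    rw [show (fun s => (g s x) ^ 2) = (fun s => g s x) ^ 2 from rfl, h2]; push_cast; ring
  simp only [hpt] at h
  rwa [intervalIntegral.integral_const_mul] at h

lemma cont_param {g : ℝ → ℝ → ℝ} (hg : Continuous (uncurry g)) (a b : ℝ) :
    Continuous fun τ => ∫ x in a..b, g τ x :=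
  intervalIntegral.continuous_parametric_intervalIntegral_of_continuous' (μ := volume) hg a b

lemma E_deriv {w : ℝ → ℝ → ℝ} (hw : ContDiff ℝ (⊤ : ℕ∞) (uncurry w)) (L D α : ℝ)
    (E : ℝ → ℝ)
    (hE : ∀ t, E t = (1/2) * (D * (∫ x in (0:ℝ)..L, (px (px w) t x) ^ 2)
        + (∫ x in (0:ℝ)..L, (pt w t x) ^ 2)
        + α * ∫ x in (0:ℝ)..L, (px (pt w) t x) ^ 2)) (τ : ℝ) :
    HasDerivAt E
      (D * (∫ x in (0:ℝ)..L, px (px w) τ x * px (px (pt w)) τ x)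
        + (∫ x in (0:ℝ)..L, pt w τ x * pt (pt w) τ x)
        + α * ∫ x in (0:ℝ)..L, px (pt w) τ x * px (pt (pt w)) τ x) τ := by
  have hEf : E = fun t => (1/2) * (D * (∫ x in (0:ℝ)..L, (px (px w) t x) ^ 2)
        + (∫ x in (0:ℝ)..L, (pt w t x) ^ 2)
        + α * ∫ x in (0:ℝ)..L, (px (pt w) t x) ^ 2) := funext hE
  have c1 : pt (px (px w)) = px (px (pt w)) :=
    (ptpx_comm (px_smooth hw)).trans (congrArg px (ptpx_comm hw))
  have c3 : pt (px (pt w)) = px (pt (pt w)) := ptpx_comm (pt_smooth hw)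
  have h1 := hasDerivAt_sq_integral (px_smooth (px_smooth hw)) 0 L τ
  have h2 := hasDerivAt_sq_integral (pt_smooth hw) 0 L τ
  have h3 := hasDerivAt_sq_integral (px_smooth (pt_smooth hw)) 0 L τ
  rw [c1] at h1
  rw [c3] at h3
  have htot := HasDerivAt.const_mul (1/2 : ℝ)
    (((HasDerivAt.const_mul D h1).add h2).add (HasDerivAt.const_mul α h3))
  rw [hEf]
  exact htot.congr_deriv (by ring)

lemma integral_identity {w : ℝ → ℝ → ℝ} (hw : ContDiff ℝ (⊤ : ℕ∞) (uncurry w))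
    {L D k₀ k₁ α β U : ℝ} (hL : 0 < L) (p₀ : ℝ → ℝ)
    (hp₀ : ContinuousOn p₀ (Set.Icc 0 L))
    (heq : ∀ t ≥ (0:ℝ), ∀ x ∈ Set.Icc (0:ℝ) L,
      pt (pt w) t x - α * px (px (pt (pt w))) t x + D * px (px (px (px w))) t x
          + k₀ * pt w t x - k₁ * px (px (pt w)) t x
        = p₀ x - β * (pt w t x + U * px w t x))
    (hbc : ∀ t ≥ (0:ℝ), w t 0 = 0 ∧ px w t 0 = 0 ∧ px (px w) t L = 0 ∧
      -α * px (pt (pt w)) t L + D * px (px (px w)) t L - k₁ * px (pt w) t L = 0)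
    {τ : ℝ} (hτ : 0 < τ) :
    D * (∫ x in (0:ℝ)..L, px (px w) τ x * px (px (pt w)) τ x)
      + (∫ x in (0:ℝ)..L, pt w τ x * pt (pt w) τ x)
      + α * ∫ x in (0:ℝ)..L, px (pt w) τ x * px (pt (pt w)) τ x
    = (∫ x in (0:ℝ)..L, p₀ x * pt w τ x)
      - β * U * (∫ x in (0:ℝ)..L, px w τ x * pt w τ x)
      - ((k₀ + β) * (∫ x in (0:ℝ)..L, (pt w τ x) ^ 2)
          + k₁ * ∫ x in (0:ℝ)..L, (px (pt w) τ x) ^ 2) := by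
  have hwt := pt_smooth hw
  have hwx := px_smooth hw
  have hwtt := pt_smooth hwt
  have hwtx := px_smooth hwt
  have hwxx := px_smooth hwx
  have hwxxx := px_smooth hwxx
  have hwxxxx := px_smooth hwxxx
  have hwttx := px_smooth hwtt
  have hwttxx := px_smooth hwttx
  have hwtxx := px_smooth hwtx
  -- boundary facts
  have hbt0 : pt w τ 0 = 0 := by
    have hev : (fun s => w s 0) =ᶠ[nhds τ] (fun _ => (0:ℝ)) := by
      filter_upwards [Ioi_mem_nhds hτ] with s hs
      exact (hbc s (le_of_lt hs)).1
    show deriv (fun s => w s 0) τ = 0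
    rw [hev.deriv_eq]
    simp
  have hbtx0 : px (pt w) τ 0 = 0 := by
    rw [← ptpx_comm hw]
    have hev : (fun s => px w s 0) =ᶠ[nhds τ] (fun _ => (0:ℝ)) := by
      filter_upwards [Ioi_mem_nhds hτ] with s hs
      exact (hbc s (le_of_lt hs)).2.1
    show deriv (fun s => px w s 0) τ = 0
    rw [hev.deriv_eq]
    simp
  have hbxxL : px (px w) τ L = 0 := (hbc τ hτ.le).2.2.1
  have hbc4 : -α * px (pt (pt w)) τ L + D * px (px (px w)) τ L - k₁ * px (pt w) τ L = 0 :=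
    (hbc τ hτ.le).2.2.2
  -- derivative and integrability helpers
  have hd : ∀ (g : ℝ → ℝ → ℝ), ContDiff ℝ (⊤ : ℕ∞) (Function.uncurry g) →
      ∀ x ∈ Set.uIcc (0:ℝ) L, HasDerivAt (fun y => g τ y) (px g τ x) x :=
    fun g hg x _ => hasDerivAt_x hg τ x
  have hi : ∀ (g : ℝ → ℝ → ℝ), ContDiff ℝ (⊤ : ℕ∞) (Function.uncurry g) →
      IntervalIntegrable (fun x => g τ x) volume 0 L :=
    fun g hg => (cont_slice hg τ).intervalIntegrable 0 L
  -- integrations by parts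
  have ibp1 : ∫ x in (0:ℝ)..L, pt w τ x * px (px (pt (pt w))) τ x
      = pt w τ L * px (pt (pt w)) τ L - pt w τ 0 * px (pt (pt w)) τ 0
        - ∫ x in (0:ℝ)..L, px (pt w) τ x * px (pt (pt w)) τ x :=
    integral_mul_deriv_eq_deriv_mul (hd _ hwt) (hd _ hwttx) (hi _ hwtx) (hi _ hwttxx)
  have ibp2 : ∫ x in (0:ℝ)..L, pt w τ x * px (px (px (px w))) τ x
      = pt w τ L * px (px (px w)) τ L - pt w τ 0 * px (px (px w)) τ 0
        - ∫ x in (0:ℝ)..L, px (pt w) τ x * px (px (px w)) τ x :=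
    integral_mul_deriv_eq_deriv_mul (hd _ hwt) (hd _ hwxxx) (hi _ hwtx) (hi _ hwxxxx)
  have ibp3 : ∫ x in (0:ℝ)..L, px (pt w) τ x * px (px (px w)) τ x
      = px (pt w) τ L * px (px w) τ L - px (pt w) τ 0 * px (px w) τ 0
        - ∫ x in (0:ℝ)..L, px (px (pt w)) τ x * px (px w) τ x :=
    integral_mul_deriv_eq_deriv_mul (hd _ hwtx) (hd _ hwxx) (hi _ hwtxx) (hi _ hwxxx)
  have ibp4 : ∫ x in (0:ℝ)..L, pt w τ x * px (px (pt w)) τ x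
      = pt w τ L * px (pt w) τ L - pt w τ 0 * px (pt w) τ 0
        - ∫ x in (0:ℝ)..L, px (pt w) τ x * px (pt w) τ x :=
    integral_mul_deriv_eq_deriv_mul (hd _ hwt) (hd _ hwtx) (hi _ hwtx) (hi _ hwtxx)
  have comm3 : ∫ x in (0:ℝ)..L, px (px (pt w)) τ x * px (px w) τ x
      = ∫ x in (0:ℝ)..L, px (px w) τ x * px (px (pt w)) τ x :=
    intervalIntegral.integral_congr fun x _ => mul_comm _ _
  have sqeq : ∫ x in (0:ℝ)..L, px (pt w) τ x * px (pt w) τ x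
      = ∫ x in (0:ℝ)..L, (px (pt w) τ x) ^ 2 :=
    intervalIntegral.integral_congr fun x _ => (pow_two _).symm
  -- substitute the PDE
  have pde : Set.EqOn (fun x => pt w τ x * pt (pt w) τ x)
      (fun x => α * (pt w τ x * px (px (pt (pt w))) τ x)
        - D * (pt w τ x * px (px (px (px w))) τ x)
        - k₀ * (pt w τ x) ^ 2 + k₁ * (pt w τ x * px (px (pt w)) τ x)
        + p₀ x * pt w τ x - β * (pt w τ x) ^ 2
        - β * U * (px w τ x * pt w τ x)) (Set.uIcc (0:ℝ) L) := by
    intro x hx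
    have h := heq τ hτ.le x (by rwa [Set.uIcc_of_le hL.le] at hx)
    simp only
    linear_combination pt w τ x * h
  have hsub : ∫ x in (0:ℝ)..L, pt w τ x * pt (pt w) τ x
      = ∫ x in (0:ℝ)..L, (α * (pt w τ x * px (px (pt (pt w))) τ x)
        - D * (pt w τ x * px (px (px (px w))) τ x)
        - k₀ * (pt w τ x) ^ 2 + k₁ * (pt w τ x * px (px (pt w)) τ x)
        + p₀ x * pt w τ x - β * (pt w τ x) ^ 2
        - β * U * (px w τ x * pt w τ x)) :=
    intervalIntegral.integral_congr pde
  -- integrability of pieces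
  have iT1 : IntervalIntegrable
      (fun x => α * (pt w τ x * px (px (pt (pt w))) τ x)) volume 0 L :=
    ((continuous_const.mul ((cont_slice hwt τ).mul (cont_slice hwttxx τ)))).intervalIntegrable 0 L
  have iT2 : IntervalIntegrable
      (fun x => D * (pt w τ x * px (px (px (px w))) τ x)) volume 0 L :=
    ((continuous_const.mul ((cont_slice hwt τ).mul (cont_slice hwxxxx τ)))).intervalIntegrable 0 L
  have iT3 : IntervalIntegrable (fun x => k₀ * (pt w τ x) ^ 2) volume 0 L :=
    (continuous_const.mul ((cont_slice hwt τ).pow 2)).intervalIntegrable 0 L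
  have iT4 : IntervalIntegrable
      (fun x => k₁ * (pt w τ x * px (px (pt w)) τ x)) volume 0 L :=
    ((continuous_const.mul ((cont_slice hwt τ).mul (cont_slice hwtxx τ)))).intervalIntegrable 0 L
  have iT5 : IntervalIntegrable (fun x => p₀ x * pt w τ x) volume 0 L :=
    ((hp₀.mono (Set.uIcc_of_le hL.le).subset).mul
      (cont_slice hwt τ).continuousOn).intervalIntegrable
  have iT6 : IntervalIntegrable (fun x => β * (pt w τ x) ^ 2) volume 0 L :=
    (continuous_const.mul ((cont_slice hwt τ).pow 2)).intervalIntegrable 0 L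
  have iT7 : IntervalIntegrable
      (fun x => β * U * (px w τ x * pt w τ x)) volume 0 L :=
    ((continuous_const.mul ((cont_slice hwx τ).mul (cont_slice hwt τ)))).intervalIntegrable 0 L
  have split : ∫ x in (0:ℝ)..L, (α * (pt w τ x * px (px (pt (pt w))) τ x)
        - D * (pt w τ x * px (px (px (px w))) τ x)
        - k₀ * (pt w τ x) ^ 2 + k₁ * (pt w τ x * px (px (pt w)) τ x)
        + p₀ x * pt w τ x - β * (pt w τ x) ^ 2
        - β * U * (px w τ x * pt w τ x))
      = α * (∫ x in (0:ℝ)..L, pt w τ x * px (px (pt (pt w))) τ x)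
        - D * (∫ x in (0:ℝ)..L, pt w τ x * px (px (px (px w))) τ x)
        - k₀ * (∫ x in (0:ℝ)..L, (pt w τ x) ^ 2)
        + k₁ * (∫ x in (0:ℝ)..L, pt w τ x * px (px (pt w)) τ x)
        + (∫ x in (0:ℝ)..L, p₀ x * pt w τ x)
        - β * (∫ x in (0:ℝ)..L, (pt w τ x) ^ 2)
        - β * U * (∫ x in (0:ℝ)..L, px w τ x * pt w τ x) := by
    rw [intervalIntegral.integral_sub (((((iT1.sub iT2).sub iT3).add iT4).add iT5).sub iT6) iT7,
        intervalIntegral.integral_sub ((((iT1.sub iT2).sub iT3).add iT4).add iT5) iT6,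
        intervalIntegral.integral_add (((iT1.sub iT2).sub iT3).add iT4) iT5,
        intervalIntegral.integral_add ((iT1.sub iT2).sub iT3) iT4,
        intervalIntegral.integral_sub (iT1.sub iT2) iT3,
        intervalIntegral.integral_sub iT1 iT2,
        intervalIntegral.integral_const_mul, intervalIntegral.integral_const_mul,
        intervalIntegral.integral_const_mul, intervalIntegral.integral_const_mul,
        intervalIntegral.integral_const_mul, intervalIntegral.integral_const_mul]
  have key := hsub.trans split
  linear_combination key + α * ibp1 - D * ibp2 + D * ibp3 - D * comm3 + k₁ * ibp4 - k₁ * sqeq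
    - pt w τ L * hbc4
    + (-α * px (pt (pt w)) τ 0 + D * px (px (px w)) τ 0 - k₁ * px (pt w) τ 0) * hbt0
    + (D * px (pt w) τ L) * hbxxL + (- D * px (px w) τ 0) * hbtx0

end CLAux

/-- Energy identity for the linear clamped–free (cantilever) piston-theoretic beam
with rotational inertia `α` and square-root damping `k₁`. -/
theorem cantilever_linear_energy_identity (L D k₀ k₁ α β U : ℝ) (hL : 0 < L) (hD : 0 < D)
    (hk₀ : 0 ≤ k₀) (hk₁ : 0 ≤ k₁) (hα : 0 ≤ α) (hβ : 0 ≤ β) (hU : 0 ≤ U)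
    (p₀ : ℝ → ℝ) (hp₀ : ContinuousOn p₀ (Set.Icc 0 L))
    (w : ℝ → ℝ → ℝ) (hw : ContDiff ℝ (⊤ : ℕ∞) (Function.uncurry w))
    (heq : ∀ t ≥ (0:ℝ), ∀ x ∈ Set.Icc (0:ℝ) L,
      pt (pt w) t x - α * px (px (pt (pt w))) t x + D * px (px (px (px w))) t x
          + k₀ * pt w t x - k₁ * px (px (pt w)) t x
        = p₀ x - β * (pt w t x + U * px w t x))
    (hbc : ∀ t ≥ (0:ℝ), w t 0 = 0 ∧ px w t 0 = 0 ∧ px (px w) t L = 0 ∧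
      -α * px (pt (pt w)) t L + D * px (px (px w)) t L - k₁ * px (pt w) t L = 0)
    (E : ℝ → ℝ)
    (hE : ∀ t, E t = (1/2) * (D * (∫ x in (0:ℝ)..L, (px (px w) t x) ^ 2)
        + (∫ x in (0:ℝ)..L, (pt w t x) ^ 2)
        + α * ∫ x in (0:ℝ)..L, (px (pt w) t x) ^ 2)) :
    ∀ t ≥ (0:ℝ),
      E t + (∫ τ in (0:ℝ)..t,
          ((k₀ + β) * (∫ x in (0:ℝ)..L, (pt w τ x) ^ 2)
            + k₁ * ∫ x in (0:ℝ)..L, (px (pt w) τ x) ^ 2))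
        = E 0 + (∫ τ in (0:ℝ)..t, ∫ x in (0:ℝ)..L, p₀ x * pt w τ x)
          - β * U * ∫ τ in (0:ℝ)..t, ∫ x in (0:ℝ)..L, px w τ x * pt w τ x := by
  intro t ht
  rcases eq_or_lt_of_le ht with rfl | hpos
  · simp
  -- a continuous global extension of p₀
  set q : ℝ → ℝ := fun x => p₀ (max 0 (min x L)) with hq_def
  have hqc : Continuous q := by
    apply hp₀.comp_continuous (continuous_const.max (continuous_id.min continuous_const))
    intro x
    exact ⟨le_max_left _ _, max_le hL.le (min_le_right x L)⟩
  have hq_eqOn : ∀ τ : ℝ, (∫ x in (0:ℝ)..L, p₀ x * pt w τ x)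
      = ∫ x in (0:ℝ)..L, q x * pt w τ x := by
    intro τ
    apply intervalIntegral.integral_congr
    intro x hx
    rw [Set.uIcc_of_le hL.le] at hx
    have hqx : q x = p₀ x := by
      rw [hq_def]
      simp only
      rw [min_eq_left hx.2, max_eq_right hx.1]
    show p₀ x * pt w τ x = q x * pt w τ x
    rw [hqx]
  have hwt := CLAux.pt_smooth hw
  have hwx := CLAux.px_smooth hw
  have hwtx := CLAux.px_smooth hwt
  -- continuity of the parametric integrals
  have cuA : Continuous (Function.uncurry fun τ x => q x * pt w τ x) := by
    exact (hqc.comp continuous_snd).mul hwt.continuous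
  have cuS : Continuous (Function.uncurry fun τ x => px w τ x * pt w τ x) := by
    exact hwx.continuous.mul hwt.continuous
  have cuQ1 : Continuous (Function.uncurry fun τ x => (pt w τ x) ^ 2) := by
    exact hwt.continuous.pow 2
  have cuQ2 : Continuous (Function.uncurry fun τ x => (px (pt w) τ x) ^ 2) := by
    exact hwtx.continuous.pow 2
  have contA : Continuous fun τ => ∫ x in (0:ℝ)..L, q x * pt w τ x :=
    CLAux.cont_param cuA 0 L
  have contS : Continuous fun τ => ∫ x in (0:ℝ)..L, px w τ x * pt w τ x :=
    CLAux.cont_param cuS 0 L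
  have contQ1 : Continuous fun τ => ∫ x in (0:ℝ)..L, (pt w τ x) ^ 2 :=
    CLAux.cont_param cuQ1 0 L
  have contQ2 : Continuous fun τ => ∫ x in (0:ℝ)..L, (px (pt w) τ x) ^ 2 :=
    CLAux.cont_param cuQ2 0 L
  have contg : Continuous fun τ => (∫ x in (0:ℝ)..L, q x * pt w τ x)
      - β * U * (∫ x in (0:ℝ)..L, px w τ x * pt w τ x)
      - ((k₀ + β) * (∫ x in (0:ℝ)..L, (pt w τ x) ^ 2)
          + k₁ * ∫ x in (0:ℝ)..L, (px (pt w) τ x) ^ 2) :=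
    (contA.sub (continuous_const.mul contS)).sub
      ((continuous_const.mul contQ1).add (continuous_const.mul contQ2))
  have hEcont : ContinuousOn E (Set.Icc 0 t) := by
    have : Differentiable ℝ E := fun τ =>
      (CLAux.E_deriv hw L D α E hE τ).differentiableAt
    exact this.continuous.continuousOn
  have hderiv : ∀ τ ∈ Set.Ioo (0:ℝ) t, HasDerivAt E
      ((∫ x in (0:ℝ)..L, q x * pt w τ x)
        - β * U * (∫ x in (0:ℝ)..L, px w τ x * pt w τ x)
        - ((k₀ + β) * (∫ x in (0:ℝ)..L, (pt w τ x) ^ 2)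
            + k₁ * ∫ x in (0:ℝ)..L, (px (pt w) τ x) ^ 2)) τ := by
    intro τ hτ
    have hA := CLAux.E_deriv hw L D α E hE τ
    have hB := CLAux.integral_identity hw hL p₀ hp₀ heq hbc hτ.1
    rw [hB, hq_eqOn τ] at hA
    exact hA
  have ftc : ∫ τ in (0:ℝ)..t, ((∫ x in (0:ℝ)..L, q x * pt w τ x)
        - β * U * (∫ x in (0:ℝ)..L, px w τ x * pt w τ x)
        - ((k₀ + β) * (∫ x in (0:ℝ)..L, (pt w τ x) ^ 2)
            + k₁ * ∫ x in (0:ℝ)..L, (px (pt w) τ x) ^ 2))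
      = E t - E 0 :=
    intervalIntegral.integral_eq_sub_of_hasDerivAt_of_le ht hEcont hderiv
      (contg.intervalIntegrable 0 t)
  have hgsplit : ∫ τ in (0:ℝ)..t, ((∫ x in (0:ℝ)..L, q x * pt w τ x)
        - β * U * (∫ x in (0:ℝ)..L, px w τ x * pt w τ x)
        - ((k₀ + β) * (∫ x in (0:ℝ)..L, (pt w τ x) ^ 2)
            + k₁ * ∫ x in (0:ℝ)..L, (px (pt w) τ x) ^ 2))
      = (∫ τ in (0:ℝ)..t, ∫ x in (0:ℝ)..L, q x * pt w τ x)
        - β * U * (∫ τ in (0:ℝ)..t, ∫ x in (0:ℝ)..L, px w τ x * pt w τ x)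
        - ∫ τ in (0:ℝ)..t, ((k₀ + β) * (∫ x in (0:ℝ)..L, (pt w τ x) ^ 2)
            + k₁ * ∫ x in (0:ℝ)..L, (px (pt w) τ x) ^ 2) := by
    rw [intervalIntegral.integral_sub
        ((contA.intervalIntegrable 0 t).sub
          ((show Continuous fun τ => β * U * ∫ x in (0:ℝ)..L, px w τ x * pt w τ x from continuous_const.mul contS).intervalIntegrable 0 t))
        ((show Continuous fun τ => (k₀ + β) * (∫ x in (0:ℝ)..L, (pt w τ x) ^ 2)
            + k₁ * ∫ x in (0:ℝ)..L, (px (pt w) τ x) ^ 2 from (continuous_const.mul contQ1).add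
          (continuous_const.mul contQ2)).intervalIntegrable 0 t),
      intervalIntegral.integral_sub (contA.intervalIntegrable 0 t)
        ((show Continuous fun τ => β * U * ∫ x in (0:ℝ)..L, px w τ x * pt w τ x from continuous_const.mul contS).intervalIntegrable 0 t),
      intervalIntegral.integral_const_mul]
  simp only [hq_eqOn]
  linear_combination hgsplit - ftc
end

section
/- Let L > 0, D > 0, k₀ ≥ 0, β ≥ 0, U ≥ 0, b₂ > 0, b₁ ∈ ℝ, let p₀ be continuous on [0,L], and let w(t,x) be a smooth real-valued function on [0,∞) × [0,L] satisfying, for all t ≥ 0 and x ∈ [0,L], the nonlinear extensible beam equation w_tt + D w_xxxx + k₀ w_t + (b₁ − b₂‖w_x(t,·)‖²) w_xx = p₀(x) − β(w_t + U w_x), together with the clamped boundary conditions w(t,0) = w_x(t,0) = w(t,L) = w_x(t,L) = 0 for all t ≥ 0. Define 𝓔(t) = (1/2)(D‖w_xx(t,·)‖² + ‖w_t(t,·)‖²) + (b₂/4)‖w_x(t,·)‖⁴ − (b₁/2)‖w_x(t,·)‖² − ∫₀^L p₀(x) w(t,x) dx. Then for all t ≥ 0: 𝓔(t) + (k₀+β)∫₀ᵗ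 ‖w_t(τ,·)‖² dτ = 𝓔(0) − βU ∫₀ᵗ ∫₀^L w_x(τ,x) w_t(τ,x) dx dτ. -/
open MeasureTheory intervalIntegral

set_option maxHeartbeats 2000000


noncomputable def d1 (G : ℝ × ℝ → ℝ) : ℝ × ℝ → ℝ := fun p => fderiv ℝ G p (1, 0)
noncomputable def d2 (G : ℝ × ℝ → ℝ) : ℝ × ℝ → ℝ := fun p => fderiv ℝ G p (0, 1)

lemma contDiff_dv {G : ℝ × ℝ → ℝ} (hG : ContDiff ℝ (⊤ : ℕ∞) G) (v : ℝ × ℝ) :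
    ContDiff ℝ (⊤ : ℕ∞) (fun p => fderiv ℝ G p v) :=
  (hG.fderiv_right (by simp)).clm_apply contDiff_const

lemma contDiff_d1 {G : ℝ × ℝ → ℝ} (hG : ContDiff ℝ (⊤ : ℕ∞) G) : ContDiff ℝ (⊤ : ℕ∞) (d1 G) :=
  contDiff_dv hG _

lemma contDiff_d2 {G : ℝ × ℝ → ℝ} (hG : ContDiff ℝ (⊤ : ℕ∞) G) : ContDiff ℝ (⊤ : ℕ∞) (d2 G) :=
  contDiff_dv hG _

lemma hasDerivAt_d1 {G : ℝ × ℝ → ℝ} (hG : ContDiff ℝ (⊤ : ℕ∞) G) (t x : ℝ) :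
    HasDerivAt (fun s => G (s, x)) (d1 G (t, x)) t := by
  have h := (hG.differentiable (by simp) (t, x)).hasFDerivAt
  exact h.comp_hasDerivAt t (HasDerivAt.prodMk (hasDerivAt_id t) (hasDerivAt_const t x))

lemma hasDerivAt_d2 {G : ℝ × ℝ → ℝ} (hG : ContDiff ℝ (⊤ : ℕ∞) G) (t x : ℝ) :
    HasDerivAt (fun y => G (t, y)) (d2 G (t, x)) x := by
  have h := (hG.differentiable (by simp) (t, x)).hasFDerivAt
  exact h.comp_hasDerivAt x (HasDerivAt.prodMk (hasDerivAt_const x t) (hasDerivAt_id x))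

lemma d1_d2_comm {G : ℝ × ℝ → ℝ} (hG : ContDiff ℝ (⊤ : ℕ∞) G) :
    d1 (d2 G) = d2 (d1 G) := by
  funext p
  have hG1 : ContDiff ℝ (⊤ : ℕ∞) (fderiv ℝ G) := hG.fderiv_right (by simp)
  have hd : ∀ q, HasFDerivAt G (fderiv ℝ G q) q := fun q =>
    (hG.differentiable (by simp) q).hasFDerivAt
  have hd2 : HasFDerivAt (fderiv ℝ G) (fderiv ℝ (fderiv ℝ G) p) p :=
    (hG1.differentiable (by simp) p).hasFDerivAt
  have hsymm := second_derivative_symmetric hd hd2 ((1:ℝ), (0:ℝ)) ((0:ℝ), (1:ℝ))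
  have h1 : HasFDerivAt (d2 G)
      ((fderiv ℝ G p).comp (0 : ℝ × ℝ →L[ℝ] ℝ × ℝ)
        + (fderiv ℝ (fderiv ℝ G) p).flip ((0:ℝ), (1:ℝ))) p :=
    hd2.clm_apply (hasFDerivAt_const (((0:ℝ), (1:ℝ))) p)
  have h2 : HasFDerivAt (d1 G)
      ((fderiv ℝ G p).comp (0 : ℝ × ℝ →L[ℝ] ℝ × ℝ)
        + (fderiv ℝ (fderiv ℝ G) p).flip ((1:ℝ), (0:ℝ))) p :=
    hd2.clm_apply (hasFDerivAt_const (((1:ℝ), (0:ℝ))) p)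
  have e1 : d1 (d2 G) p = fderiv ℝ (fderiv ℝ G) p ((1:ℝ), (0:ℝ)) ((0:ℝ), (1:ℝ)) := by
    have := h1.fderiv
    simp only [d1, d2] at *
    rw [this]; simp
  have e2 : d2 (d1 G) p = fderiv ℝ (fderiv ℝ G) p ((0:ℝ), (1:ℝ)) ((1:ℝ), (0:ℝ)) := by
    have := h2.fderiv
    simp only [d1, d2] at *
    rw [this]; simp
  rw [e1, e2, hsymm]

lemma param_hasDerivAt {L : ℝ} (hL : 0 < L) (c : ℝ → ℝ)
    (hc : ContinuousOn c (Set.Icc 0 L)) (G G' : ℝ × ℝ → ℝ)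
    (hG : Continuous G) (hG' : Continuous G')
    (hd : ∀ t x, HasDerivAt (fun s => G (s, x)) (G' (t, x)) t) (t₀ : ℝ) :
    HasDerivAt (fun t => ∫ x in (0:ℝ)..L, c x * G (t, x))
      (∫ x in (0:ℝ)..L, c x * G' (t₀, x)) t₀ := by
  have hIoc : Set.uIoc (0:ℝ) L = Set.Ioc 0 L := Set.uIoc_of_le hL.le
  have hIcc : Set.uIcc (0:ℝ) L = Set.Icc 0 L := Set.uIcc_of_le hL.le
  obtain ⟨Cc, hCc⟩ := isCompact_Icc.exists_bound_of_continuousOn hc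
  set K : Set (ℝ × ℝ) := Set.Icc (t₀ - 1) (t₀ + 1) ×ˢ Set.Icc 0 L with hK
  have hKc : IsCompact K := isCompact_Icc.prod isCompact_Icc
  obtain ⟨Cg, hCg⟩ := hKc.exists_bound_of_continuousOn hG'.continuousOn
  have hmeas : ∀ t : ℝ, AEStronglyMeasurable (fun x => c x * G (t, x))
      (volume.restrict (Set.uIoc (0:ℝ) L)) := by
    intro t
    rw [hIoc]
    refine ContinuousOn.aestronglyMeasurable ?_ measurableSet_Ioc
    exact (hc.mono Set.Ioc_subset_Icc_self).mul
      ((hG.comp (continuous_const.prodMk continuous_id)).continuousOn)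
  have hmeas' : AEStronglyMeasurable (fun x => c x * G' (t₀, x))
      (volume.restrict (Set.uIoc (0:ℝ) L)) := by
    rw [hIoc]
    refine ContinuousOn.aestronglyMeasurable ?_ measurableSet_Ioc
    exact (hc.mono Set.Ioc_subset_Icc_self).mul
      ((hG'.comp (continuous_const.prodMk continuous_id)).continuousOn)
  have hint : IntervalIntegrable (fun x => c x * G (t₀, x)) volume 0 L := by
    apply ContinuousOn.intervalIntegrable
    rw [hIcc]
    exact hc.mul ((hG.comp (continuous_const.prodMk continuous_id)).continuousOn)
  have hbound : ∀ᵐ x ∂(volume : Measure ℝ), x ∈ Set.uIoc (0:ℝ) L →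
      ∀ t ∈ Metric.ball t₀ 1, ‖c x * G' (t, x)‖ ≤ (max Cc 0) * (max Cg 0) := by
    refine Filter.Eventually.of_forall fun x hx t ht => ?_
    rw [hIoc] at hx
    have hxI : x ∈ Set.Icc (0:ℝ) L := Set.Ioc_subset_Icc_self hx
    have htI : (t, x) ∈ K := by
      constructor
      · have := Metric.mem_ball.mp ht
        rw [Real.dist_eq] at this
        constructor <;> [linarith [abs_lt.mp this]; linarith [abs_lt.mp this]]
      · exact hxI
    rw [norm_mul]
    have h1 : ‖c x‖ ≤ max Cc 0 := (hCc x hxI).trans (le_max_left _ _)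
    have h2 : ‖G' (t, x)‖ ≤ max Cg 0 := (hCg _ htI).trans (le_max_left _ _)
    exact mul_le_mul h1 h2 (norm_nonneg _) (le_max_right _ _)
  have hdiff : ∀ᵐ x ∂(volume : Measure ℝ), x ∈ Set.uIoc (0:ℝ) L →
      ∀ t ∈ Metric.ball t₀ 1, HasDerivAt (fun t => c x * G (t, x)) (c x * G' (t, x)) t :=
    Filter.Eventually.of_forall fun x _ t _ => (hd t x).const_mul (c x)
  exact (intervalIntegral.hasDerivAt_integral_of_dominated_loc_of_deriv_le (Metric.ball_mem_nhds t₀ one_pos)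
    (Filter.Eventually.of_forall hmeas) hint hmeas' hbound
    (intervalIntegrable_const) hdiff).2

lemma sq_param {L : ℝ} (hL : 0 < L) {H : ℝ × ℝ → ℝ} (hH : ContDiff ℝ (⊤ : ℕ∞) H) (t₀ : ℝ) :
    HasDerivAt (fun t => ∫ x in (0:ℝ)..L, H (t, x) ^ 2)
      (∫ x in (0:ℝ)..L, 2 * H (t₀, x) * d1 H (t₀, x)) t₀ := by
  have := param_hasDerivAt hL (fun _ => 1) continuousOn_const
    (fun p => H p ^ 2) (fun p => 2 * H p * d1 H p)
    (hH.continuous.pow 2)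
    ((continuous_const.mul hH.continuous).mul (contDiff_d1 hH).continuous)
    (fun t x => by simpa using (hasDerivAt_d1 hH t x).fun_pow 2) t₀
  simpa using this

lemma ibp_aux {L : ℝ} (f g f' g' : ℝ → ℝ)
    (hf : ∀ x, HasDerivAt f (f' x) x) (hg : ∀ x, HasDerivAt g (g' x) x)
    (hfc : Continuous f') (hgc : Continuous g')
    (hf0 : f 0 = 0) (hfL : f L = 0) :
    ∫ x in (0:ℝ)..L, f x * g' x = - ∫ x in (0:ℝ)..L, f' x * g x := by
  rw [intervalIntegral.integral_mul_deriv_eq_deriv_mul (fun x _ => hf x) (fun x _ => hg x)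
    (hfc.intervalIntegrable 0 L) (hgc.intervalIntegrable 0 L), hf0, hfL]
  ring

lemma pt_rep {G : ℝ × ℝ → ℝ} (hG : ContDiff ℝ (⊤ : ℕ∞) G) (a b : ℝ) :
    pt (fun s y => G (s, y)) a b = d1 G (a, b) := (hasDerivAt_d1 hG a b).deriv

lemma px_rep {G : ℝ × ℝ → ℝ} (hG : ContDiff ℝ (⊤ : ℕ∞) G) (a b : ℝ) :
    px (fun s y => G (s, y)) a b = d2 G (a, b) := (hasDerivAt_d2 hG a b).deriv


/-- Energy identity for the nonlinear extensible (Krieger–Woinowsky) clamped–clamped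
piston-theoretic beam. -/
theorem clamped_nonlinear_energy_identity (L D k₀ β U b₂ b₁ : ℝ) (hL : 0 < L) (hD : 0 < D)
    (hk₀ : 0 ≤ k₀) (hβ : 0 ≤ β) (hU : 0 ≤ U) (hb₂ : 0 < b₂)
    (p₀ : ℝ → ℝ) (hp₀ : ContinuousOn p₀ (Set.Icc 0 L))
    (w : ℝ → ℝ → ℝ) (hw : ContDiff ℝ (⊤ : ℕ∞) (Function.uncurry w))
    (heq : ∀ t ≥ (0:ℝ), ∀ x ∈ Set.Icc (0:ℝ) L,
      pt (pt w) t x + D * px (px (px (px w))) t x + k₀ * pt w t x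
          + (b₁ - b₂ * ∫ y in (0:ℝ)..L, (px w t y) ^ 2) * px (px w) t x
        = p₀ x - β * (pt w t x + U * px w t x))
    (hbc : ∀ t ≥ (0:ℝ), w t 0 = 0 ∧ px w t 0 = 0 ∧ w t L = 0 ∧ px w t L = 0)
    (En : ℝ → ℝ)
    (hEn : ∀ t, En t = (1/2) * (D * (∫ x in (0:ℝ)..L, (px (px w) t x) ^ 2)
        + ∫ x in (0:ℝ)..L, (pt w t x) ^ 2)
        + (b₂/4) * (∫ x in (0:ℝ)..L, (px w t x) ^ 2) ^ 2
        - (b₁/2) * (∫ x in (0:ℝ)..L, (px w t x) ^ 2)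
        - ∫ x in (0:ℝ)..L, p₀ x * w t x) :
    ∀ t ≥ (0:ℝ),
      En t + (k₀ + β) * (∫ τ in (0:ℝ)..t, ∫ x in (0:ℝ)..L, (pt w τ x) ^ 2)
        = En 0 - β * U * ∫ τ in (0:ℝ)..t, ∫ x in (0:ℝ)..L, px w τ x * pt w τ x := by
  intro t ht
  set F : ℝ × ℝ → ℝ := Function.uncurry w with hF_def
  have hF : ContDiff ℝ (⊤ : ℕ∞) F := hw
  have hIcc : Set.uIcc (0:ℝ) L = Set.Icc 0 L := Set.uIcc_of_le hL.le
  -- representations of partial derivatives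
  have hwe : w = fun s y => F (s, y) := rfl
  have hpt1 : ∀ a b, pt w a b = d1 F (a, b) := fun a b => pt_rep hF a b
  have hpx1 : ∀ a b, px w a b = d2 F (a, b) := fun a b => px_rep hF a b
  have hpx1' : px w = fun a b => d2 F (a, b) := funext fun a => funext fun b => hpx1 a b
  have hpt1' : pt w = fun a b => d1 F (a, b) := funext fun a => funext fun b => hpt1 a b
  have hpx2 : ∀ a b, px (px w) a b = d2 (d2 F) (a, b) := by
    intro a b; rw [hpx1']; exact px_rep (contDiff_d2 hF) a b
  have hpx2' : px (px w) = fun a b => d2 (d2 F) (a, b) :=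
    funext fun a => funext fun b => hpx2 a b
  have hpx3' : px (px (px w)) = fun a b => d2 (d2 (d2 F)) (a, b) := by
    rw [hpx2']; exact funext fun a => funext fun b => px_rep (contDiff_d2 (contDiff_d2 hF)) a b
  have hpx4 : ∀ a b, px (px (px (px w))) a b = d2 (d2 (d2 (d2 F))) (a, b) := by
    intro a b; rw [hpx3']
    exact px_rep (contDiff_d2 (contDiff_d2 (contDiff_d2 hF))) a b
  have hpt2 : ∀ a b, pt (pt w) a b = d1 (d1 F) (a, b) := by
    intro a b; rw [hpt1']; exact pt_rep (contDiff_d1 hF) a b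
  -- commutation
  have hcomm1 : d1 (d2 F) = d2 (d1 F) := d1_d2_comm hF
  have hcomm2 : d1 (d2 (d2 F)) = d2 (d2 (d1 F)) :=
    (d1_d2_comm (contDiff_d2 hF)).trans (congrArg d2 hcomm1)
  -- energy in terms of d1/d2
  have hEn2 : En = fun s => (1/2) * (D * (∫ x in (0:ℝ)..L, (d2 (d2 F) (s, x)) ^ 2)
        + ∫ x in (0:ℝ)..L, (d1 F (s, x)) ^ 2)
        + (b₂/4) * (∫ x in (0:ℝ)..L, (d2 F (s, x)) ^ 2) ^ 2
        - (b₁/2) * (∫ x in (0:ℝ)..L, (d2 F (s, x)) ^ 2)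
        - ∫ x in (0:ℝ)..L, p₀ x * F (s, x) := by
    funext s
    rw [hEn s]
    simp only [hpt1, hpx1, hpx2]
    rfl
  have hDer : ∀ τ : ℝ, HasDerivAt En
      ((1/2) * (D * (∫ x in (0:ℝ)..L, 2 * d2 (d2 F) (τ, x) * d1 (d2 (d2 F)) (τ, x))
        + ∫ x in (0:ℝ)..L, 2 * d1 F (τ, x) * d1 (d1 F) (τ, x))
        + (b₂/4) * (2 * (∫ x in (0:ℝ)..L, (d2 F (τ, x)) ^ 2) ^ 1
            * (∫ x in (0:ℝ)..L, 2 * d2 F (τ, x) * d1 (d2 F) (τ, x)))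
        - (b₁/2) * (∫ x in (0:ℝ)..L, 2 * d2 F (τ, x) * d1 (d2 F) (τ, x))
        - ∫ x in (0:ℝ)..L, p₀ x * d1 F (τ, x)) τ := by
    intro τ
    rw [hEn2]
    have hA := sq_param hL (contDiff_d2 (contDiff_d2 hF)) τ
    have hB := sq_param hL (contDiff_d1 hF) τ
    have hC := sq_param hL (contDiff_d2 hF) τ
    have hP := param_hasDerivAt hL p₀ hp₀ F (d1 F) hF.continuous (contDiff_d1 hF).continuous
      (fun a b => hasDerivAt_d1 hF a b) τ
    have hcomb := (((((hA.const_mul D).add hB).const_mul (1/2)).add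
      ((hC.fun_pow 2).const_mul (b₂/4))).sub (hC.const_mul (b₁/2))).sub hP
    exact hcomb.congr_deriv (by norm_num)
  -- continuity shortcuts
  have hcd1 : Continuous (d1 F) := (contDiff_d1 hF).continuous
  have hcd2 : Continuous (d2 F) := (contDiff_d2 hF).continuous
  have hxc : ∀ {H : ℝ × ℝ → ℝ}, Continuous H → ∀ τ : ℝ, Continuous (fun x => H (τ, x)) :=
    fun h τ => h.comp (Continuous.prodMk_right τ)
  -- the derivative is the dissipation for τ ∈ (0, t)
  have hg : ∀ τ ∈ Set.Ioo (0:ℝ) t, HasDerivAt En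
      (-((k₀ + β) * ∫ x in (0:ℝ)..L, (d1 F (τ, x)) ^ 2)
        - β * U * ∫ x in (0:ℝ)..L, d2 F (τ, x) * d1 F (τ, x)) τ := by
    intro τ hτ
    have hIoi : Set.Ioi (0:ℝ) ∈ nhds τ := Ioi_mem_nhds hτ.1
    -- boundary values of the velocity and its x-derivative
    have hu0 : d1 F (τ, 0) = 0 := by
      rw [← hpt1]
      have hev : (fun s => w s 0) =ᶠ[nhds τ] fun _ => (0:ℝ) := by
        filter_upwards [hIoi] with s hs
        exact (hbc s (le_of_lt hs)).1
      show deriv (fun s => w s 0) τ = 0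
      rw [hev.deriv_eq]
      simp
    have huL : d1 F (τ, L) = 0 := by
      rw [← hpt1]
      have hev : (fun s => w s L) =ᶠ[nhds τ] fun _ => (0:ℝ) := by
        filter_upwards [hIoi] with s hs
        exact (hbc s (le_of_lt hs)).2.2.1
      show deriv (fun s => w s L) τ = 0
      rw [hev.deriv_eq]
      simp
    have hux0 : d2 (d1 F) (τ, 0) = 0 := by
      rw [← hcomm1]
      have h1 : d1 (d2 F) (τ, 0) = deriv (fun s => d2 F (s, 0)) τ :=
        ((hasDerivAt_d1 (contDiff_d2 hF) τ 0).deriv).symm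
      rw [h1]
      have hev : (fun s => d2 F (s, 0)) =ᶠ[nhds τ] fun _ => (0:ℝ) := by
        filter_upwards [hIoi] with s hs
        rw [← hpx1]
        exact (hbc s (le_of_lt hs)).2.1
      rw [hev.deriv_eq]
      simp
    have huxL : d2 (d1 F) (τ, L) = 0 := by
      rw [← hcomm1]
      have h1 : d1 (d2 F) (τ, L) = deriv (fun s => d2 F (s, L)) τ :=
        ((hasDerivAt_d1 (contDiff_d2 hF) τ L).deriv).symm
      rw [h1]
      have hev : (fun s => d2 F (s, L)) =ᶠ[nhds τ] fun _ => (0:ℝ) := by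
        filter_upwards [hIoi] with s hs
        rw [← hpx1]
        exact (hbc s (le_of_lt hs)).2.2.2
      rw [hev.deriv_eq]
      simp
    -- integration by parts
    have ibp1 : ∫ x in (0:ℝ)..L, d1 F (τ, x) * d2 (d2 (d2 (d2 F))) (τ, x)
        = - ∫ x in (0:ℝ)..L, d2 (d1 F) (τ, x) * d2 (d2 (d2 F)) (τ, x) :=
      ibp_aux _ _ _ _ (fun x => hasDerivAt_d2 (contDiff_d1 hF) τ x)
        (fun x => hasDerivAt_d2 (contDiff_d2 (contDiff_d2 (contDiff_d2 hF))) τ x)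
        (hxc (contDiff_d2 (contDiff_d1 hF)).continuous τ)
        (hxc (contDiff_d2 (contDiff_d2 (contDiff_d2 (contDiff_d2 hF)))).continuous τ) hu0 huL
    have ibp2 : ∫ x in (0:ℝ)..L, d2 (d1 F) (τ, x) * d2 (d2 (d2 F)) (τ, x)
        = - ∫ x in (0:ℝ)..L, d2 (d2 (d1 F)) (τ, x) * d2 (d2 F) (τ, x) :=
      ibp_aux _ _ _ _ (fun x => hasDerivAt_d2 (contDiff_d2 (contDiff_d1 hF)) τ x)
        (fun x => hasDerivAt_d2 (contDiff_d2 (contDiff_d2 hF)) τ x)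
        (hxc (contDiff_d2 (contDiff_d2 (contDiff_d1 hF))).continuous τ)
        (hxc (contDiff_d2 (contDiff_d2 (contDiff_d2 hF))).continuous τ) hux0 huxL
    have ibp3 : ∫ x in (0:ℝ)..L, d1 F (τ, x) * d2 (d2 F) (τ, x)
        = - ∫ x in (0:ℝ)..L, d2 (d1 F) (τ, x) * d2 F (τ, x) :=
      ibp_aux _ _ _ _ (fun x => hasDerivAt_d2 (contDiff_d1 hF) τ x)
        (fun x => hasDerivAt_d2 (contDiff_d2 hF) τ x)
        (hxc (contDiff_d2 (contDiff_d1 hF)).continuous τ)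
        (hxc (contDiff_d2 (contDiff_d2 hF)).continuous τ) hu0 huL
    -- rewrite the mixed derivatives
    have hJ6 : ∫ x in (0:ℝ)..L, d2 (d2 F) (τ, x) * d1 (d2 (d2 F)) (τ, x)
        = ∫ x in (0:ℝ)..L, d1 F (τ, x) * d2 (d2 (d2 (d2 F))) (τ, x) := by
      simp only [hcomm2]
      rw [intervalIntegral.integral_congr
        (g := fun x => d2 (d2 (d1 F)) (τ, x) * d2 (d2 F) (τ, x)) (fun x _ => mul_comm _ _),
        ibp1, ibp2, neg_neg]
    have hJ7 : ∫ x in (0:ℝ)..L, d2 F (τ, x) * d1 (d2 F) (τ, x)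
        = - ∫ x in (0:ℝ)..L, d1 F (τ, x) * d2 (d2 F) (τ, x) := by
      simp only [hcomm1]
      rw [intervalIntegral.integral_congr
        (g := fun x => d2 (d1 F) (τ, x) * d2 F (τ, x)) (fun x _ => mul_comm _ _),
        ibp3, neg_neg]
    -- pointwise PDE multiplied by the velocity
    have hpde' : ∀ x ∈ Set.uIcc (0:ℝ) L, d1 F (τ, x) * d1 (d1 F) (τ, x) =
        p₀ x * d1 F (τ, x) - ((k₀ + β) * (d1 F (τ, x)) ^ 2
          + β * U * (d2 F (τ, x) * d1 F (τ, x))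
          + D * (d1 F (τ, x) * d2 (d2 (d2 (d2 F))) (τ, x))
          + (b₁ - b₂ * ∫ y in (0:ℝ)..L, (d2 F (τ, y)) ^ 2)
            * (d1 F (τ, x) * d2 (d2 F) (τ, x))) := by
      intro x hx
      have h := heq τ hτ.1.le x (by rwa [hIcc] at hx)
      simp only [hpt1, hpt2, hpx1, hpx2, hpx4] at h
      linear_combination (d1 F (τ, x)) * h
    -- split the integral of the PDE
    have h1 : IntervalIntegrable (fun x => p₀ x * d1 F (τ, x)) volume 0 L := by
      apply ContinuousOn.intervalIntegrable
      rw [hIcc]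
      exact hp₀.mul (hxc hcd1 τ).continuousOn
    have h2 : IntervalIntegrable (fun x => (k₀ + β) * (d1 F (τ, x)) ^ 2) volume 0 L :=
      (continuous_const.mul ((hxc hcd1 τ).pow 2)).intervalIntegrable 0 L
    have h3 : IntervalIntegrable (fun x => β * U * (d2 F (τ, x) * d1 F (τ, x))) volume 0 L :=
      (continuous_const.mul ((hxc hcd2 τ).mul (hxc hcd1 τ))).intervalIntegrable 0 L
    have h4 : IntervalIntegrable
        (fun x => D * (d1 F (τ, x) * d2 (d2 (d2 (d2 F))) (τ, x))) volume 0 L :=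
      (continuous_const.mul ((hxc hcd1 τ).mul
        (hxc (contDiff_d2 (contDiff_d2 (contDiff_d2 (contDiff_d2 hF)))).continuous τ))).intervalIntegrable 0 L
    have h5 : IntervalIntegrable
        (fun x => (b₁ - b₂ * ∫ y in (0:ℝ)..L, (d2 F (τ, y)) ^ 2)
          * (d1 F (τ, x) * d2 (d2 F) (τ, x))) volume 0 L :=
      (continuous_const.mul ((hxc hcd1 τ).mul
        (hxc (contDiff_d2 (contDiff_d2 hF)).continuous τ))).intervalIntegrable 0 L
    have hsplit : ∫ x in (0:ℝ)..L, d1 F (τ, x) * d1 (d1 F) (τ, x)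
        = (∫ x in (0:ℝ)..L, p₀ x * d1 F (τ, x))
          - ((k₀ + β) * (∫ x in (0:ℝ)..L, (d1 F (τ, x)) ^ 2)
            + β * U * (∫ x in (0:ℝ)..L, d2 F (τ, x) * d1 F (τ, x))
            + D * (∫ x in (0:ℝ)..L, d1 F (τ, x) * d2 (d2 (d2 (d2 F))) (τ, x))
            + (b₁ - b₂ * ∫ y in (0:ℝ)..L, (d2 F (τ, y)) ^ 2)
              * (∫ x in (0:ℝ)..L, d1 F (τ, x) * d2 (d2 F) (τ, x))) := by
      rw [intervalIntegral.integral_congr hpde',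
        intervalIntegral.integral_sub h1 (((h2.add h3).add h4).add h5),
        intervalIntegral.integral_add ((h2.add h3).add h4) h5,
        intervalIntegral.integral_add (h2.add h3) h4,
        intervalIntegral.integral_add h2 h3,
        intervalIntegral.integral_const_mul, intervalIntegral.integral_const_mul,
        intervalIntegral.integral_const_mul, intervalIntegral.integral_const_mul]
    -- pull out factors of two
    have eA : ∫ x in (0:ℝ)..L, 2 * d2 (d2 F) (τ, x) * d1 (d2 (d2 F)) (τ, x)
        = 2 * ∫ x in (0:ℝ)..L, d2 (d2 F) (τ, x) * d1 (d2 (d2 F)) (τ, x) := by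
      simp_rw [mul_assoc]
      exact intervalIntegral.integral_const_mul 2 _
    have eB : ∫ x in (0:ℝ)..L, 2 * d1 F (τ, x) * d1 (d1 F) (τ, x)
        = 2 * ∫ x in (0:ℝ)..L, d1 F (τ, x) * d1 (d1 F) (τ, x) := by
      simp_rw [mul_assoc]
      exact intervalIntegral.integral_const_mul 2 _
    have eC : ∫ x in (0:ℝ)..L, 2 * d2 F (τ, x) * d1 (d2 F) (τ, x)
        = 2 * ∫ x in (0:ℝ)..L, d2 F (τ, x) * d1 (d2 F) (τ, x) := by
      simp_rw [mul_assoc]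
      exact intervalIntegral.integral_const_mul 2 _
    have hval : (1/2) * (D * (∫ x in (0:ℝ)..L, 2 * d2 (d2 F) (τ, x) * d1 (d2 (d2 F)) (τ, x))
        + ∫ x in (0:ℝ)..L, 2 * d1 F (τ, x) * d1 (d1 F) (τ, x))
        + (b₂/4) * (2 * (∫ x in (0:ℝ)..L, (d2 F (τ, x)) ^ 2) ^ 1
            * (∫ x in (0:ℝ)..L, 2 * d2 F (τ, x) * d1 (d2 F) (τ, x)))
        - (b₁/2) * (∫ x in (0:ℝ)..L, 2 * d2 F (τ, x) * d1 (d2 F) (τ, x))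
        - ∫ x in (0:ℝ)..L, p₀ x * d1 F (τ, x)
        = -((k₀ + β) * ∫ x in (0:ℝ)..L, (d1 F (τ, x)) ^ 2)
          - β * U * ∫ x in (0:ℝ)..L, d2 F (τ, x) * d1 F (τ, x) := by
      rw [eA, eB, eC, hJ6, hJ7, hsplit]
      ring
    rw [← hval]
    exact hDer τ
  -- fundamental theorem of calculus
  have hEncont : ContinuousOn En (Set.Icc 0 t) := fun s _ =>
    ((hDer s).differentiableAt.continuousAt).continuousWithinAt
  have hI1c : Continuous (fun τ => ∫ x in (0:ℝ)..L, (d1 F (τ, x)) ^ 2) :=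
    intervalIntegral.continuous_parametric_intervalIntegral_of_continuous'
      (f := fun τ x => (d1 F (τ, x)) ^ 2) (hcd1.fun_pow 2) 0 L
  have hI2c : Continuous (fun τ => ∫ x in (0:ℝ)..L, d2 F (τ, x) * d1 F (τ, x)) :=
    intervalIntegral.continuous_parametric_intervalIntegral_of_continuous'
      (f := fun τ x => d2 F (τ, x) * d1 F (τ, x)) (hcd2.mul hcd1) 0 L
  have h6 : IntervalIntegrable
      (fun τ => -((k₀ + β) * ∫ x in (0:ℝ)..L, (d1 F (τ, x)) ^ 2)) volume 0 t :=
    ((continuous_const.mul hI1c).neg).intervalIntegrable 0 t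
  have h7 : IntervalIntegrable
      (fun τ => β * U * ∫ x in (0:ℝ)..L, d2 F (τ, x) * d1 F (τ, x)) volume 0 t :=
    (continuous_const.mul hI2c).intervalIntegrable 0 t
  have hgint : IntervalIntegrable
      (fun τ => -((k₀ + β) * ∫ x in (0:ℝ)..L, (d1 F (τ, x)) ^ 2)
        - β * U * ∫ x in (0:ℝ)..L, d2 F (τ, x) * d1 F (τ, x)) volume 0 t := h6.sub h7
  have key := intervalIntegral.integral_eq_sub_of_hasDerivAt_of_le ht hEncont hg hgint
  have hsplit2 : ∫ τ in (0:ℝ)..t,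
      (-((k₀ + β) * ∫ x in (0:ℝ)..L, (d1 F (τ, x)) ^ 2)
        - β * U * ∫ x in (0:ℝ)..L, d2 F (τ, x) * d1 F (τ, x))
      = -((k₀ + β) * ∫ τ in (0:ℝ)..t, ∫ x in (0:ℝ)..L, (d1 F (τ, x)) ^ 2)
        - β * U * ∫ τ in (0:ℝ)..t, ∫ x in (0:ℝ)..L, d2 F (τ, x) * d1 F (τ, x) := by
    rw [intervalIntegral.integral_sub h6 h7, intervalIntegral.integral_neg,
      intervalIntegral.integral_const_mul, intervalIntegral.integral_const_mul]
  rw [hsplit2] at key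
  simp only [hpt1, hpx1]
  linarith [key]
end

section
/- Let L > 0, D > 0, k₀ ≥ 0, β ≥ 0, U ≥ 0, b₂ > 0, b₁ ∈ ℝ, let p₀ be continuous on [0,L], and let w(t,x) be a smooth real-valued function on [0,∞) × [0,L] satisfying, for all t ≥ 0 and x ∈ [0,L], the nonlinear extensible beam equation w_tt + D w_xxxx + k₀ w_t + (b₁ − b₂‖w_x(t,·)‖²) w_xx = p₀(x) − β(w_t + U w_x), together with the hinged boundary conditions w(t,0) = w_xx(t,0) = w(t,L) = w_xx(t,L) = 0 for all t ≥ 0. Define 𝓔(t) = (1/2)(D‖w_xx(t,·)‖² + ‖w_t(t,·)‖²) + (b₂/4)‖w_x(t,·)‖⁴ − (b₁/2)‖w_x(t,·)‖² − ∫₀^L p₀(x) w(t,x) dx. Then for all t ≥ 0: 𝓔(t) + (k₀+β)∫₀ᵗ ‖w_t(τ,·)‖² dτ = 𝓔(0) − βU ∫₀ᵗ ∫₀^L w_x(τ,x) w_t(τ,x) dx dτ. -/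
open MeasureTheory intervalIntegral

section aux
variable {w : ℝ → ℝ → ℝ}

lemma hasDerivAt_t (hw : ContDiff ℝ (⊤ : ℕ∞) (Function.uncurry w)) (t x : ℝ) :
    HasDerivAt (fun s => w s x) (pt w t x) t := by
  have hin : DifferentiableAt ℝ (fun s : ℝ => (s, x)) t :=
    differentiableAt_id.prodMk (differentiableAt_const x)
  exact (((hw.differentiable (by simp)) (t, x)).comp t hin).hasDerivAt

lemma hasDerivAt_x (hw : ContDiff ℝ (⊤ : ℕ∞) (Function.uncurry w)) (t x : ℝ) :
    HasDerivAt (fun y => w t y) (px w t x) x := by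
  have hin : DifferentiableAt ℝ (fun y : ℝ => (t, y)) x :=
    (differentiableAt_const t).prodMk differentiableAt_id
  exact (((hw.differentiable (by simp)) (t, x)).comp x hin).hasDerivAt

lemma pt_eq_fderiv (hw : ContDiff ℝ (⊤ : ℕ∞) (Function.uncurry w)) (t x : ℝ) :
    pt w t x = fderiv ℝ (Function.uncurry w) (t, x) (1, 0) := by
  have h1 : HasDerivAt (fun s : ℝ => (s, x)) ((1 : ℝ), (0 : ℝ)) t :=
    (hasDerivAt_id t).prodMk (hasDerivAt_const t x)
  have h2 : HasDerivAt (fun s => w s x) (fderiv ℝ (Function.uncurry w) (t, x) (1, 0)) t :=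
    by have := (hw.differentiable (by simp) (t, x)).hasFDerivAt.comp_hasDerivAt t h1; exact this
  exact ((hasDerivAt_t hw t x).unique h2)

lemma px_eq_fderiv (hw : ContDiff ℝ (⊤ : ℕ∞) (Function.uncurry w)) (t x : ℝ) :
    px w t x = fderiv ℝ (Function.uncurry w) (t, x) (0, 1) := by
  have h1 : HasDerivAt (fun y : ℝ => (t, y)) ((0 : ℝ), (1 : ℝ)) x :=
    (hasDerivAt_const x t).prodMk (hasDerivAt_id x)
  have h2 : HasDerivAt (fun y => w t y) (fderiv ℝ (Function.uncurry w) (t, x) (0, 1)) x :=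
    by have := (hw.differentiable (by simp) (t, x)).hasFDerivAt.comp_hasDerivAt x h1; exact this
  exact ((hasDerivAt_x hw t x).unique h2)

lemma contDiff_pt (hw : ContDiff ℝ (⊤ : ℕ∞) (Function.uncurry w)) :
    ContDiff ℝ (⊤ : ℕ∞) (Function.uncurry (pt w)) := by
  have : Function.uncurry (pt w) = fun p : ℝ × ℝ => fderiv ℝ (Function.uncurry w) p (1, 0) := by
    funext p
    exact pt_eq_fderiv hw p.1 p.2
  rw [this]
  exact (hw.fderiv_right (le_refl _)).clm_apply contDiff_const

lemma contDiff_px (hw : ContDiff ℝ (⊤ : ℕ∞) (Function.uncurry w)) :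
    ContDiff ℝ (⊤ : ℕ∞) (Function.uncurry (px w)) := by
  have : Function.uncurry (px w) = fun p : ℝ × ℝ => fderiv ℝ (Function.uncurry w) p (0, 1) := by
    funext p
    exact px_eq_fderiv hw p.1 p.2
  rw [this]
  exact (hw.fderiv_right (le_refl _)).clm_apply contDiff_const

lemma clairaut (hw : ContDiff ℝ (⊤ : ℕ∞) (Function.uncurry w)) : pt (px w) = px (pt w) := by
  funext t x
  set f := Function.uncurry w
  have hdf : Differentiable ℝ (fderiv ℝ f) :=
    (hw.fderiv_right (m := (⊤ : ℕ∞)) (le_refl _)).differentiable (by simp)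
  have hsymm : ∀ v u : ℝ × ℝ,
      fderiv ℝ (fderiv ℝ f) (t, x) v u = fderiv ℝ (fderiv ℝ f) (t, x) u v := by
    intro v u
    exact (hw.contDiffAt.isSymmSndFDerivAt (by rw [minSmoothness_of_isRCLikeNormedField]; exact WithTop.coe_le_coe.2 (le_top : (2:ℕ∞) ≤ ⊤))) v u
  have e1 : pt (px w) t x = fderiv ℝ (fderiv ℝ f) (t, x) (1, 0) (0, 1) := by
    have he : (fun s => px w s x) = fun s => fderiv ℝ f (s, x) (0, 1) := by
      funext s; exact px_eq_fderiv hw s x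
    show deriv (fun s => px w s x) t = _
    rw [he]
    have h1 : HasDerivAt (fun s : ℝ => (s, x)) ((1 : ℝ), (0 : ℝ)) t :=
      (hasDerivAt_id t).prodMk (hasDerivAt_const t x)
    have h2 : HasFDerivAt (fun p : ℝ × ℝ => fderiv ℝ f p (0, 1))
        ((fderiv ℝ (fderiv ℝ f) (t, x)).flip (0, 1)) (t, x) := by
      have := ((hdf (t, x)).hasFDerivAt.clm_apply (hasFDerivAt_const ((0:ℝ),(1:ℝ)) _))
      simpa using this
    have h3 := h2.comp_hasDerivAt t h1
    simpa [Function.comp_def] using h3.deriv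
  have e2 : px (pt w) t x = fderiv ℝ (fderiv ℝ f) (t, x) (0, 1) (1, 0) := by
    have he : (fun y => pt w t y) = fun y => fderiv ℝ f (t, y) (1, 0) := by
      funext y; exact pt_eq_fderiv hw t y
    show deriv (fun y => pt w t y) x = _
    rw [he]
    have h1 : HasDerivAt (fun y : ℝ => (t, y)) ((0 : ℝ), (1 : ℝ)) x :=
      (hasDerivAt_const x t).prodMk (hasDerivAt_id x)
    have h2 : HasFDerivAt (fun p : ℝ × ℝ => fderiv ℝ f p (1, 0))
        ((fderiv ℝ (fderiv ℝ f) (t, x)).flip (1, 0)) (t, x) := by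
      have := ((hdf (t, x)).hasFDerivAt.clm_apply (hasFDerivAt_const ((1:ℝ),(0:ℝ)) _))
      simpa using this
    have h3 := h2.comp_hasDerivAt x h1
    simpa [Function.comp_def] using h3.deriv
  rw [e1, e2, hsymm]

/-- Differentiate `t ↦ ∫ x in 0..L, g t x` under the integral sign. -/
lemma hasDerivAt_param {g g' : ℝ → ℝ → ℝ} {L : ℝ} (hL : 0 < L)
    (hgc : ContinuousOn (Function.uncurry g) ((Set.univ : Set ℝ) ×ˢ Set.Icc 0 L))
    (hg'c : ContinuousOn (Function.uncurry g') ((Set.univ : Set ℝ) ×ˢ Set.Icc 0 L))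
    (hderiv : ∀ x ∈ Set.Icc (0:ℝ) L, ∀ t : ℝ, HasDerivAt (fun s => g s x) (g' t x) t)
    (t₀ : ℝ) :
    HasDerivAt (fun t => ∫ x in (0:ℝ)..L, g t x) (∫ x in (0:ℝ)..L, g' t₀ x) t₀ := by
  have hsub : Set.uIcc (0:ℝ) L = Set.Icc 0 L := Set.uIcc_of_le hL.le
  have hIsub : Set.uIoc (0:ℝ) L ⊆ Set.Icc 0 L := by
    rw [Set.uIoc_of_le hL.le]; exact Set.Ioc_subset_Icc_self
  have slice : ∀ {h : ℝ → ℝ → ℝ},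
      ContinuousOn (Function.uncurry h) ((Set.univ : Set ℝ) ×ˢ Set.Icc 0 L) →
      ∀ t, ContinuousOn (h t) (Set.Icc (0:ℝ) L) := by
    intro h hc t
    have : ContinuousOn (Function.uncurry h ∘ fun x => (t, x)) (Set.Icc (0:ℝ) L) :=
      hc.comp ((continuous_const.prodMk continuous_id).continuousOn)
        (fun x hx => ⟨Set.mem_univ _, hx⟩)
    exact this
  obtain ⟨C, hC⟩ : ∃ C, ∀ p ∈ Set.Icc (t₀ - 1) (t₀ + 1) ×ˢ Set.Icc (0:ℝ) L,
      ‖Function.uncurry g' p‖ ≤ C := by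
    have hK : IsCompact (Set.Icc (t₀ - 1) (t₀ + 1) ×ˢ Set.Icc (0:ℝ) L) :=
      (isCompact_Icc).prod isCompact_Icc
    exact hK.exists_bound_of_continuousOn (hg'c.mono (by
      intro p hp; exact ⟨Set.mem_univ _, hp.2⟩))
  have key := intervalIntegral.hasDerivAt_integral_of_dominated_loc_of_deriv_le
      (F := g) (F' := g') (x₀ := t₀) (a := (0:ℝ)) (b := L) (μ := volume)
      (bound := fun _ => C) (s := Metric.ball t₀ 1) (Metric.ball_mem_nhds t₀ one_pos)
      (Filter.Eventually.of_forall (fun t => by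
        exact ((slice hgc t).mono hIsub).aestronglyMeasurable measurableSet_uIoc))
      (by
        apply ContinuousOn.intervalIntegrable
        rw [hsub]
        exact slice hgc t₀)
      (by
        exact ((slice hg'c t₀).mono hIsub).aestronglyMeasurable measurableSet_uIoc)
      (Filter.Eventually.of_forall (fun x hx t ht => by
        refine hC (t, x) ⟨?_, hIsub hx⟩
        have h1 := Metric.mem_ball.1 ht
        have h2 := abs_lt.1 (by simpa [Real.dist_eq] using h1)
        constructor <;> [linarith [h2.1]; linarith [h2.2]]))
      (intervalIntegrable_const)
      (Filter.Eventually.of_forall (fun x hx t _ => hderiv x (hIsub hx) t))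
  exact key.2

end aux
/-- Energy identity for the nonlinear extensible (Krieger–Woinowsky) hinged–hinged
piston-theoretic beam. -/
theorem hinged_nonlinear_energy_identity (L D k₀ β U b₂ b₁ : ℝ) (hL : 0 < L) (hD : 0 < D)
    (hk₀ : 0 ≤ k₀) (hβ : 0 ≤ β) (hU : 0 ≤ U) (hb₂ : 0 < b₂)
    (p₀ : ℝ → ℝ) (hp₀ : ContinuousOn p₀ (Set.Icc 0 L))
    (w : ℝ → ℝ → ℝ) (hw : ContDiff ℝ (⊤ : ℕ∞) (Function.uncurry w))
    (heq : ∀ t ≥ (0:ℝ), ∀ x ∈ Set.Icc (0:ℝ) L,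
      pt (pt w) t x + D * px (px (px (px w))) t x + k₀ * pt w t x
          + (b₁ - b₂ * ∫ y in (0:ℝ)..L, (px w t y) ^ 2) * px (px w) t x
        = p₀ x - β * (pt w t x + U * px w t x))
    (hbc : ∀ t ≥ (0:ℝ), w t 0 = 0 ∧ px (px w) t 0 = 0 ∧ w t L = 0 ∧ px (px w) t L = 0)
    (En : ℝ → ℝ)
    (hEn : ∀ t, En t = (1/2) * (D * (∫ x in (0:ℝ)..L, (px (px w) t x) ^ 2)
        + ∫ x in (0:ℝ)..L, (pt w t x) ^ 2)
        + (b₂/4) * (∫ x in (0:ℝ)..L, (px w t x) ^ 2) ^ 2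
        - (b₁/2) * (∫ x in (0:ℝ)..L, (px w t x) ^ 2)
        - ∫ x in (0:ℝ)..L, p₀ x * w t x) :
    ∀ t ≥ (0:ℝ),
      En t + (k₀ + β) * (∫ τ in (0:ℝ)..t, ∫ x in (0:ℝ)..L, (pt w τ x) ^ 2)
        = En 0 - β * U * ∫ τ in (0:ℝ)..t, ∫ x in (0:ℝ)..L, px w τ x * pt w τ x := by
  -- smoothness of the iterated partial derivatives
  have h1 : ContDiff ℝ (⊤ : ℕ∞) (Function.uncurry (px w)) := contDiff_px hw
  have h2 : ContDiff ℝ (⊤ : ℕ∞) (Function.uncurry (px (px w))) := contDiff_px h1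
  have h3 : ContDiff ℝ (⊤ : ℕ∞) (Function.uncurry (px (px (px w)))) := contDiff_px h2
  have h4 : ContDiff ℝ (⊤ : ℕ∞) (Function.uncurry (px (px (px (px w))))) := contDiff_px h3
  have g1 : ContDiff ℝ (⊤ : ℕ∞) (Function.uncurry (pt w)) := contDiff_pt hw
  have g2 : ContDiff ℝ (⊤ : ℕ∞) (Function.uncurry (pt (pt w))) := contDiff_pt g1
  have g1x : ContDiff ℝ (⊤ : ℕ∞) (Function.uncurry (px (pt w))) := contDiff_px g1
  have g1xx : ContDiff ℝ (⊤ : ℕ∞) (Function.uncurry (px (px (pt w)))) := contDiff_px g1x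
  have hpt1 : ContDiff ℝ (⊤ : ℕ∞) (Function.uncurry (pt (px w))) := contDiff_pt h1
  have hpt2 : ContDiff ℝ (⊤ : ℕ∞) (Function.uncurry (pt (px (px w)))) := contDiff_pt h2
  -- Clairaut
  have hc1 : pt (px w) = px (pt w) := clairaut hw
  have hc2 : pt (px (px w)) = px (px (pt w)) := by
    have h := clairaut h1
    rw [h, hc1]
  have hsub : Set.uIcc (0:ℝ) L = Set.Icc 0 L := Set.uIcc_of_le hL.le
  -- continuity of slices
  have contsl : ∀ {u : ℝ → ℝ → ℝ}, ContDiff ℝ (⊤ : ℕ∞) (Function.uncurry u) →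
      ∀ t, Continuous (u t) := by
    intro u hu t
    exact hu.continuous.comp (continuous_const.prodMk continuous_id)
  -- derivatives of the parametric integrals
  have dI0 : ∀ t, HasDerivAt (fun t => ∫ x in (0:ℝ)..L, (pt w t x) ^ 2)
      (∫ x in (0:ℝ)..L, 2 * (pt w t x * pt (pt w) t x)) t := by
    intro t
    refine hasDerivAt_param (g := fun t x => (pt w t x) ^ 2)
      (g' := fun t x => 2 * (pt w t x * pt (pt w) t x)) hL ?_ ?_ ?_ t
    · exact (g1.continuous.pow 2).continuousOn
    · exact (continuous_const.mul (g1.continuous.mul g2.continuous)).continuousOn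
    · intro x hx s
      have h := (hasDerivAt_t g1 s x).fun_pow 2
      refine h.congr_deriv ?_
      push_cast
      ring
  have dI1 : ∀ t, HasDerivAt (fun t => ∫ x in (0:ℝ)..L, (px w t x) ^ 2)
      (∫ x in (0:ℝ)..L, 2 * (px w t x * pt (px w) t x)) t := by
    intro t
    refine hasDerivAt_param (g := fun t x => (px w t x) ^ 2)
      (g' := fun t x => 2 * (px w t x * pt (px w) t x)) hL ?_ ?_ ?_ t
    · exact (h1.continuous.pow 2).continuousOn
    · exact (continuous_const.mul (h1.continuous.mul hpt1.continuous)).continuousOn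
    · intro x hx s
      have h := (hasDerivAt_t h1 s x).fun_pow 2
      refine h.congr_deriv ?_
      push_cast
      ring
  have dI2 : ∀ t, HasDerivAt (fun t => ∫ x in (0:ℝ)..L, (px (px w) t x) ^ 2)
      (∫ x in (0:ℝ)..L, 2 * (px (px w) t x * pt (px (px w)) t x)) t := by
    intro t
    refine hasDerivAt_param (g := fun t x => (px (px w) t x) ^ 2)
      (g' := fun t x => 2 * (px (px w) t x * pt (px (px w)) t x)) hL ?_ ?_ ?_ t
    · exact (h2.continuous.pow 2).continuousOn
    · exact (continuous_const.mul (h2.continuous.mul hpt2.continuous)).continuousOn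
    · intro x hx s
      have h := (hasDerivAt_t h2 s x).fun_pow 2
      refine h.congr_deriv ?_
      push_cast
      ring
  have dP : ∀ t, HasDerivAt (fun t => ∫ x in (0:ℝ)..L, p₀ x * w t x)
      (∫ x in (0:ℝ)..L, p₀ x * pt w t x) t := by
    intro t
    refine hasDerivAt_param (g := fun t x => p₀ x * w t x)
      (g' := fun t x => p₀ x * pt w t x) hL ?_ ?_ ?_ t
    · exact ContinuousOn.mul (hp₀.comp continuous_snd.continuousOn (fun p hp => hp.2))
        hw.continuous.continuousOn
    · exact ContinuousOn.mul (hp₀.comp continuous_snd.continuousOn (fun p hp => hp.2))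
        g1.continuous.continuousOn
    · intro x hx s
      exact (hasDerivAt_t hw s x).const_mul (p₀ x)
  have dBi : ∀ t, HasDerivAt (fun t => ∫ x in (0:ℝ)..L, px w t x * pt w t x)
      (∫ x in (0:ℝ)..L, (pt (px w) t x * pt w t x + px w t x * pt (pt w) t x)) t := by
    intro t
    refine hasDerivAt_param (g := fun t x => px w t x * pt w t x)
      (g' := fun t x => pt (px w) t x * pt w t x + px w t x * pt (pt w) t x) hL ?_ ?_ ?_ t
    · exact (h1.continuous.mul g1.continuous).continuousOn
    · exact ((hpt1.continuous.mul g1.continuous).add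
        (h1.continuous.mul g2.continuous)).continuousOn
    · intro x hx s
      exact (hasDerivAt_t h1 s x).mul (hasDerivAt_t g1 s x)
  -- derivative of the energy
  have hEnfun : En = fun t => (1/2) * (D * (∫ x in (0:ℝ)..L, (px (px w) t x) ^ 2)
      + ∫ x in (0:ℝ)..L, (pt w t x) ^ 2)
      + (b₂/4) * (∫ x in (0:ℝ)..L, (px w t x) ^ 2) ^ 2
      - (b₁/2) * (∫ x in (0:ℝ)..L, (px w t x) ^ 2)
      - ∫ x in (0:ℝ)..L, p₀ x * w t x := funext hEn
  have dEn : ∀ t, HasDerivAt En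
      ((1/2) * (D * (∫ x in (0:ℝ)..L, 2 * (px (px w) t x * pt (px (px w)) t x))
        + ∫ x in (0:ℝ)..L, 2 * (pt w t x * pt (pt w) t x))
      + (b₂/4) * (2 * (∫ x in (0:ℝ)..L, (px w t x) ^ 2)
          * (∫ x in (0:ℝ)..L, 2 * (px w t x * pt (px w) t x)))
      - (b₁/2) * (∫ x in (0:ℝ)..L, 2 * (px w t x * pt (px w) t x))
      - ∫ x in (0:ℝ)..L, p₀ x * pt w t x) t := by
    intro t
    rw [hEnfun]
    have Hsq : HasDerivAt (fun t => (∫ x in (0:ℝ)..L, (px w t x) ^ 2) ^ 2)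
        (2 * (∫ x in (0:ℝ)..L, (px w t x) ^ 2)
          * (∫ x in (0:ℝ)..L, 2 * (px w t x * pt (px w) t x))) t := by
      have h := (dI1 t).fun_pow 2
      refine h.congr_deriv ?_
      push_cast
      ring
    exact (((((dI2 t).const_mul D).add (dI0 t)).const_mul (1/2)).add
      (Hsq.const_mul (b₂/4))).sub ((dI1 t).const_mul (b₁/2)) |>.sub (dP t)
  -- antiderivatives in time
  have hI0cont : Continuous (fun t => ∫ x in (0:ℝ)..L, (pt w t x) ^ 2) :=
    continuous_iff_continuousAt.2 (fun t => (dI0 t).differentiableAt.continuousAt)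
  have hBicont : Continuous (fun t => ∫ x in (0:ℝ)..L, px w t x * pt w t x) :=
    continuous_iff_continuousAt.2 (fun t => (dBi t).differentiableAt.continuousAt)
  have dA : ∀ t : ℝ, HasDerivAt (fun u => ∫ τ in (0:ℝ)..u, ∫ x in (0:ℝ)..L, (pt w τ x) ^ 2)
      (∫ x in (0:ℝ)..L, (pt w t x) ^ 2) t := by
    intro t
    exact intervalIntegral.integral_hasDerivAt_right (hI0cont.intervalIntegrable _ _)
      (hI0cont.stronglyMeasurableAtFilter _ _) hI0cont.continuousAt
  have dB : ∀ t : ℝ, HasDerivAt (fun u => ∫ τ in (0:ℝ)..u, ∫ x in (0:ℝ)..L, px w τ x * pt w τ x)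
      (∫ x in (0:ℝ)..L, px w t x * pt w t x) t := by
    intro t
    exact intervalIntegral.integral_hasDerivAt_right (hBicont.intervalIntegrable _ _)
      (hBicont.stronglyMeasurableAtFilter _ _) hBicont.continuousAt
  -- the key pointwise vanishing of the derivative, for t > 0
  have key : ∀ t : ℝ, 0 < t →
      (1/2) * (D * (∫ x in (0:ℝ)..L, 2 * (px (px w) t x * pt (px (px w)) t x))
        + ∫ x in (0:ℝ)..L, 2 * (pt w t x * pt (pt w) t x))
      + (b₂/4) * (2 * (∫ x in (0:ℝ)..L, (px w t x) ^ 2)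
          * (∫ x in (0:ℝ)..L, 2 * (px w t x * pt (px w) t x)))
      - (b₁/2) * (∫ x in (0:ℝ)..L, 2 * (px w t x * pt (px w) t x))
      - (∫ x in (0:ℝ)..L, p₀ x * pt w t x)
      + (k₀ + β) * (∫ x in (0:ℝ)..L, (pt w t x) ^ 2)
      + β * U * (∫ x in (0:ℝ)..L, px w t x * pt w t x) = 0 := by
    intro t ht
    obtain ⟨hbc0, hbcxx0, hbcL, hbcxxL⟩ := hbc t ht.le
    -- vanishing of the velocity at the endpoints
    have hvt0 : pt w t 0 = 0 := by
      have hev : (fun s => w s 0) =ᶠ[nhds t] fun _ => (0:ℝ) := by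
        filter_upwards [eventually_gt_nhds ht] with s hs
        exact (hbc s hs.le).1
      show deriv (fun s => w s 0) t = 0
      rw [hev.deriv_eq]
      simp
    have hvtL : pt w t L = 0 := by
      have hev : (fun s => w s L) =ᶠ[nhds t] fun _ => (0:ℝ) := by
        filter_upwards [eventually_gt_nhds ht] with s hs
        exact (hbc s hs.le).2.2.1
      show deriv (fun s => w s L) t = 0
      rw [hev.deriv_eq]
      simp
    -- integration by parts (twice) for the bending term
    have ibpA : (∫ x in (0:ℝ)..L, px (px w) t x * pt (px (px w)) t x)
        = ∫ x in (0:ℝ)..L, px (px (px (px w))) t x * pt w t x := by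
      rw [hc2]
      have s1 : (∫ x in (0:ℝ)..L, px (px w) t x * px (px (pt w)) t x)
          = px (px w) t L * px (pt w) t L - px (px w) t 0 * px (pt w) t 0
            - ∫ x in (0:ℝ)..L, px (px (px w)) t x * px (pt w) t x :=
        intervalIntegral.integral_mul_deriv_eq_deriv_mul
          (fun x _ => hasDerivAt_x h2 t x) (fun x _ => hasDerivAt_x g1x t x)
          ((contsl h3 t).intervalIntegrable 0 L) ((contsl g1xx t).intervalIntegrable 0 L)
      have s2 : (∫ x in (0:ℝ)..L, px (px (px w)) t x * px (pt w) t x)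
          = px (px (px w)) t L * pt w t L - px (px (px w)) t 0 * pt w t 0
            - ∫ x in (0:ℝ)..L, px (px (px (px w))) t x * pt w t x :=
        intervalIntegral.integral_mul_deriv_eq_deriv_mul
          (fun x _ => hasDerivAt_x h3 t x) (fun x _ => hasDerivAt_x g1 t x)
          ((contsl h4 t).intervalIntegrable 0 L) ((contsl g1x t).intervalIntegrable 0 L)
      rw [s1, s2, hbcxx0, hbcxxL, hvt0, hvtL]
      ring
    -- integration by parts for the stretching term
    have ibpB : (∫ x in (0:ℝ)..L, px w t x * pt (px w) t x)
        = - ∫ x in (0:ℝ)..L, px (px w) t x * pt w t x := by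
      rw [hc1]
      have s3 : (∫ x in (0:ℝ)..L, px w t x * px (pt w) t x)
          = px w t L * pt w t L - px w t 0 * pt w t 0
            - ∫ x in (0:ℝ)..L, px (px w) t x * pt w t x :=
        intervalIntegral.integral_mul_deriv_eq_deriv_mul
          (fun x _ => hasDerivAt_x h1 t x) (fun x _ => hasDerivAt_x g1 t x)
          ((contsl h2 t).intervalIntegrable 0 L) ((contsl g1x t).intervalIntegrable 0 L)
      rw [s3, hvt0, hvtL]
      ring
    -- integrability of the six pieces
    have int1 : IntervalIntegrable (fun x => pt w t x * pt (pt w) t x) volume 0 L :=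
      ((contsl g1 t).mul (contsl g2 t)).intervalIntegrable 0 L
    have int2 : IntervalIntegrable
        (fun x => D * (px (px (px (px w))) t x * pt w t x)) volume 0 L :=
      (continuous_const.mul ((contsl h4 t).mul (contsl g1 t))).intervalIntegrable 0 L
    have int3 : IntervalIntegrable (fun x => (k₀ + β) * (pt w t x) ^ 2) volume 0 L :=
      (continuous_const.mul ((contsl g1 t).pow 2)).intervalIntegrable 0 L
    have int4 : IntervalIntegrable
        (fun x => (b₁ - b₂ * ∫ y in (0:ℝ)..L, (px w t y) ^ 2)
          * (px (px w) t x * pt w t x)) volume 0 L :=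
      (continuous_const.mul ((contsl h2 t).mul (contsl g1 t))).intervalIntegrable 0 L
    have int5 : IntervalIntegrable (fun x => -(p₀ x * pt w t x)) volume 0 L := by
      apply ContinuousOn.intervalIntegrable
      rw [hsub]
      exact (hp₀.mul (contsl g1 t).continuousOn).neg
    have int6 : IntervalIntegrable
        (fun x => β * U * (px w t x * pt w t x)) volume 0 L :=
      (continuous_const.mul ((contsl h1 t).mul (contsl g1 t))).intervalIntegrable 0 L
    -- the combined integrand vanishes by the PDE
    have vanish : (∫ x in (0:ℝ)..L,
        (pt w t x * pt (pt w) t x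
          + D * (px (px (px (px w))) t x * pt w t x)
          + (k₀ + β) * (pt w t x) ^ 2
          + (b₁ - b₂ * ∫ y in (0:ℝ)..L, (px w t y) ^ 2) * (px (px w) t x * pt w t x)
          + -(p₀ x * pt w t x)
          + β * U * (px w t x * pt w t x))) = 0 := by
      rw [intervalIntegral.integral_congr (g := fun _ => (0:ℝ)) ?_]
      · simp
      · intro x hx
        have hx' : x ∈ Set.Icc (0:ℝ) L := by rwa [hsub] at hx
        have hpde := heq t ht.le x hx'
        simp only
        linear_combination (pt w t x) * hpde
    -- splitting the combined integral
    have split : (∫ x in (0:ℝ)..L,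
        (pt w t x * pt (pt w) t x
          + D * (px (px (px (px w))) t x * pt w t x)
          + (k₀ + β) * (pt w t x) ^ 2
          + (b₁ - b₂ * ∫ y in (0:ℝ)..L, (px w t y) ^ 2) * (px (px w) t x * pt w t x)
          + -(p₀ x * pt w t x)
          + β * U * (px w t x * pt w t x)))
        = (∫ x in (0:ℝ)..L, pt w t x * pt (pt w) t x)
          + D * (∫ x in (0:ℝ)..L, px (px (px (px w))) t x * pt w t x)
          + (k₀ + β) * (∫ x in (0:ℝ)..L, (pt w t x) ^ 2)
          + (b₁ - b₂ * ∫ y in (0:ℝ)..L, (px w t y) ^ 2)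
            * (∫ x in (0:ℝ)..L, px (px w) t x * pt w t x)
          + (- ∫ x in (0:ℝ)..L, p₀ x * pt w t x)
          + β * U * (∫ x in (0:ℝ)..L, px w t x * pt w t x) := by
      rw [intervalIntegral.integral_add ((((int1.add int2).add int3).add int4).add int5) int6,
        intervalIntegral.integral_add (((int1.add int2).add int3).add int4) int5,
        intervalIntegral.integral_add ((int1.add int2).add int3) int4,
        intervalIntegral.integral_add (int1.add int2) int3,
        intervalIntegral.integral_add int1 int2,
        intervalIntegral.integral_const_mul, intervalIntegral.integral_const_mul,
        intervalIntegral.integral_const_mul, intervalIntegral.integral_const_mul,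
        intervalIntegral.integral_neg]
    have hsum : (∫ x in (0:ℝ)..L, pt w t x * pt (pt w) t x)
        + D * (∫ x in (0:ℝ)..L, px (px (px (px w))) t x * pt w t x)
        + (k₀ + β) * (∫ x in (0:ℝ)..L, (pt w t x) ^ 2)
        + (b₁ - b₂ * ∫ y in (0:ℝ)..L, (px w t y) ^ 2)
          * (∫ x in (0:ℝ)..L, px (px w) t x * pt w t x)
        - (∫ x in (0:ℝ)..L, p₀ x * pt w t x)
        + β * U * (∫ x in (0:ℝ)..L, px w t x * pt w t x) = 0 := by
      have h := vanish
      rw [split] at h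
      linarith
    -- pull out the constants 2 and substitute the IBP identities
    rw [intervalIntegral.integral_const_mul, intervalIntegral.integral_const_mul,
      intervalIntegral.integral_const_mul, ibpA, ibpB]
    linear_combination hsum
  -- conclude via the mean value theorem
  intro t ht0
  rcases eq_or_lt_of_le ht0 with h | htpos
  · rw [← h]
    simp
  · set G : ℝ → ℝ := fun u => En u
      + (k₀ + β) * (∫ τ in (0:ℝ)..u, ∫ x in (0:ℝ)..L, (pt w τ x) ^ 2)
      + β * U * (∫ τ in (0:ℝ)..u, ∫ x in (0:ℝ)..L, px w τ x * pt w τ x) with hG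
    have dG : ∀ u : ℝ, HasDerivAt G
        ((1/2) * (D * (∫ x in (0:ℝ)..L, 2 * (px (px w) u x * pt (px (px w)) u x))
          + ∫ x in (0:ℝ)..L, 2 * (pt w u x * pt (pt w) u x))
        + (b₂/4) * (2 * (∫ x in (0:ℝ)..L, (px w u x) ^ 2)
            * (∫ x in (0:ℝ)..L, 2 * (px w u x * pt (px w) u x)))
        - (b₁/2) * (∫ x in (0:ℝ)..L, 2 * (px w u x * pt (px w) u x))
        - (∫ x in (0:ℝ)..L, p₀ x * pt w u x)
        + (k₀ + β) * (∫ x in (0:ℝ)..L, (pt w u x) ^ 2)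
        + β * U * (∫ x in (0:ℝ)..L, px w u x * pt w u x)) u := by
      intro u
      exact ((dEn u).add ((dA u).const_mul (k₀ + β))).add ((dB u).const_mul (β * U))
    have dG0 : ∀ u ∈ Set.Ioo (0:ℝ) t, HasDerivAt G 0 u := by
      intro u hu
      have h := dG u
      rwa [key u hu.1] at h
    have hGcont : ContinuousOn G (Set.Icc 0 t) :=
      fun u _ => ((dG u).differentiableAt.continuousAt).continuousWithinAt
    obtain ⟨c, _, hceq⟩ := exists_hasDerivAt_eq_slope G (fun _ => (0:ℝ)) htpos hGcont dG0
    have hGt : G t = G 0 := by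
      have hne : t - 0 ≠ 0 := by linarith
      field_simp at hceq
      linarith
    have hA0 : (∫ τ in (0:ℝ)..(0:ℝ), ∫ x in (0:ℝ)..L, (pt w τ x) ^ 2) = 0 :=
      intervalIntegral.integral_same
    have hB0 : (∫ τ in (0:ℝ)..(0:ℝ), ∫ x in (0:ℝ)..L, px w τ x * pt w τ x) = 0 :=
      intervalIntegral.integral_same
    rw [hG] at hGt
    simp only [hA0, hB0] at hGt
    linarith [hGt]
end

section
/- Let L > 0, D > 0, k₀ ≥ 0, β > 0, U ≥ 0, b₂ > 0, b₁ ∈ ℝ, let p₀ be continuous on [0,L], and let w(t,x) be a smooth real-valued function on [0,∞) × [0,L] satisfying, for all t ≥ 0 and x ∈ [0,L], the nonlinear extensible beam equation w_tt + D w_xxxx + k₀ w_t + (b₁ − b₂‖w_x(t,·)‖²) w_xx = p₀(x) − β(w_t + U w_x), together with the clamped boundary conditions w(t,0) = w_x(t,0) = w(t,L) = w_x(t,L) = 0 for all t ≥ 0. Then the trajectory is bounded in the energy norm uniformly in time: there exists a constant C > 0 such that for all t ≥ 0, ‖w_xx(t,·)‖² + ‖w_t(t,·)‖² ≤ C. 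-/
set_option maxHeartbeats 1000000


open MeasureTheory intervalIntegral

namespace Beam
open Function Set

abbrev sm : WithTop ℕ∞ := ((⊤:ℕ∞) : WithTop ℕ∞)

lemma hasDerivAt_slice1 {f : ℝ×ℝ → ℝ} (hf : Differentiable ℝ f) (t x : ℝ) :
    HasDerivAt (fun s => f (s, x)) (fderiv ℝ f (t, x) (1, 0)) t :=
  (hf (t, x)).hasFDerivAt.comp_hasDerivAt t ((hasDerivAt_id t).prodMk (hasDerivAt_const t x))

lemma hasDerivAt_slice2 {f : ℝ×ℝ → ℝ} (hf : Differentiable ℝ f) (t x : ℝ) :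
    HasDerivAt (fun y => f (t, y)) (fderiv ℝ f (t, x) (0, 1)) x :=
  (hf (t, x)).hasFDerivAt.comp_hasDerivAt x ((hasDerivAt_const x t).prodMk (hasDerivAt_id x))

variable {u : ℝ → ℝ → ℝ}

lemma diff_of_sm (hu : ContDiff ℝ sm (uncurry u)) : Differentiable ℝ (uncurry u) :=
  hu.differentiable (by norm_num)

lemma px_eq (hu : ContDiff ℝ sm (uncurry u)) (t x : ℝ) :
    px u t x = fderiv ℝ (uncurry u) (t, x) (0, 1) :=
  (hasDerivAt_slice2 (diff_of_sm hu) t x).deriv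

lemma pt_eq (hu : ContDiff ℝ sm (uncurry u)) (t x : ℝ) :
    pt u t x = fderiv ℝ (uncurry u) (t, x) (1, 0) :=
  (hasDerivAt_slice1 (diff_of_sm hu) t x).deriv

lemma contDiff_px (hu : ContDiff ℝ sm (uncurry u)) : ContDiff ℝ sm (uncurry (px u)) := by
  have : uncurry (px u) = fun p : ℝ×ℝ => fderiv ℝ (uncurry u) p (0, 1) := by
    funext p
    exact px_eq hu p.1 p.2
  rw [this]
  exact (hu.fderiv_right (le_refl _)).clm_apply contDiff_const

lemma contDiff_pt (hu : ContDiff ℝ sm (uncurry u)) : ContDiff ℝ sm (uncurry (pt u)) := by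
  have : uncurry (pt u) = fun p : ℝ×ℝ => fderiv ℝ (uncurry u) p (1, 0) := by
    funext p
    exact pt_eq hu p.1 p.2
  rw [this]
  exact (hu.fderiv_right (le_refl _)).clm_apply contDiff_const

/-- slice derivative in x -/
lemma hasDerivAt_px (hu : ContDiff ℝ sm (uncurry u)) (t x : ℝ) :
    HasDerivAt (fun y => u t y) (px u t x) x := by
  rw [px_eq hu]
  exact hasDerivAt_slice2 (diff_of_sm hu) t x

lemma hasDerivAt_pt (hu : ContDiff ℝ sm (uncurry u)) (t x : ℝ) :
    HasDerivAt (fun s => u s x) (pt u t x) t := by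
  rw [pt_eq hu]
  exact hasDerivAt_slice1 (diff_of_sm hu) t x

/-- commutation of mixed partials -/
lemma pt_px_comm (hu : ContDiff ℝ sm (uncurry u)) : pt (px u) = px (pt u) := by
  set F := uncurry u with hF
  set G := fderiv ℝ F with hG
  have hGsm : ContDiff ℝ sm G := hu.fderiv_right (le_refl _)
  have hGdiff : Differentiable ℝ G := hGsm.differentiable (by norm_num)
  funext t x
  have hsymm : ∀ v w : ℝ×ℝ, fderiv ℝ G (t,x) v w = fderiv ℝ G (t,x) w v := by
    intro v w
    exact second_derivative_symmetric (fun y => (diff_of_sm hu y).hasFDerivAt)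
      (hGdiff (t,x)).hasFDerivAt v w
  have key : ∀ (e e' : ℝ×ℝ) (h : ∀ s y, (fun p : ℝ×ℝ => G p e) (s,y) = G (s,y) e), True := fun _ _ _ => trivial
  -- fderiv of p ↦ G p e
  have happ : ∀ (e : ℝ×ℝ) (q : ℝ×ℝ), HasFDerivAt (fun p : ℝ×ℝ => G p e) ((fderiv ℝ G q).flip e) q := by
    intro e q
    have h1 := (hGdiff q).hasFDerivAt.clm_apply (hasFDerivAt_const e q)
    simpa using h1
  have h1 : pt (px u) t x = fderiv ℝ G (t,x) (1,0) (0,1) := by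
    have : (fun s => px u s x) = fun s => (fun p : ℝ×ℝ => G p (0,1)) (s, x) := by
      funext s; exact px_eq hu s x
    show deriv (fun s => px u s x) t = _
    rw [this]
    have := (hasDerivAt_slice1 (fun q => ((happ (0,1) q).differentiableAt)) t x).deriv
    rw [this]
    rw [(happ (0,1) (t,x)).fderiv]
    rfl
  have h2 : px (pt u) t x = fderiv ℝ G (t,x) (0,1) (1,0) := by
    have : (fun y => pt u t y) = fun y => (fun p : ℝ×ℝ => G p (1,0)) (t, y) := by
      funext y; exact pt_eq hu t y
    show deriv (fun y => pt u t y) x = _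
    rw [this]
    have := (hasDerivAt_slice2 (fun q => ((happ (1,0) q).differentiableAt)) t x).deriv
    rw [this]
    rw [(happ (1,0) (t,x)).fderiv]
    rfl
  rw [h1, h2, hsymm]

end Beam

namespace Beam2
open Function Set

lemma deriv_zero_on_Ici {f : ℝ → ℝ} (hf : Differentiable ℝ f) (h : ∀ s ≥ (0:ℝ), f s = 0)
    {t : ℝ} (ht : 0 ≤ t) : deriv f t = 0 := by
  have h1 : HasDerivWithinAt f (deriv f t) (Set.Ici 0) t := (hf t).hasDerivAt.hasDerivWithinAt
  have h2 : HasDerivWithinAt (fun _ : ℝ => (0:ℝ)) (deriv f t) (Set.Ici 0) t :=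
    h1.congr (fun s hs => (h s hs).symm) (h t ht).symm
  have h3 : HasDerivWithinAt (fun _ : ℝ => (0:ℝ)) 0 (Set.Ici 0) t := hasDerivWithinAt_const t _ 0
  have hu : UniqueDiffWithinAt ℝ (Set.Ici (0:ℝ)) t := uniqueDiffOn_Ici 0 t ht
  rw [← h2.derivWithin hu, h3.derivWithin hu]

lemma leibniz {a b : ℝ} (hab : a ≤ b) {c : ℝ → ℝ} (hc : ContinuousOn c (Set.Icc a b))
    {g g' : ℝ → ℝ → ℝ} (hg : Continuous (uncurry g)) (hg' : Continuous (uncurry g'))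
    (hdg : ∀ t x, HasDerivAt (fun s => g s x) (g' t x) t) (t₀ : ℝ) :
    HasDerivAt (fun t => ∫ x in a..b, c x * g t x) (∫ x in a..b, c x * g' t₀ x) t₀ := by
  obtain ⟨Mc, hMc⟩ := isCompact_Icc.exists_bound_of_continuousOn hc
  obtain ⟨Mg, hMg⟩ := (isCompact_Icc.prod isCompact_Icc).exists_bound_of_continuousOn
    (hg'.continuousOn (s := Set.Icc (t₀-1) (t₀+1) ×ˢ Set.Icc a b))
  have hIcc : Set.uIoc a b ⊆ Set.Icc a b := by
    rw [Set.uIoc_of_le hab]; exact Set.Ioc_subset_Icc_self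
  have hMc0 : 0 ≤ Mc := le_trans (norm_nonneg _) (hMc a ⟨le_refl a, hab⟩)
  have hMg0 : 0 ≤ Mg := le_trans (norm_nonneg _)
    (hMg (t₀, a) ⟨⟨by linarith, by linarith⟩, ⟨le_refl a, hab⟩⟩)
  have meas : ∀ t : ℝ, AEStronglyMeasurable (fun x => c x * g t x)
      (volume.restrict (Set.uIoc a b)) := fun t =>
    ContinuousOn.aestronglyMeasurable
      ((hc.mono hIcc).mul ((hg.comp (Continuous.prodMk_right t)).continuousOn)) measurableSet_uIoc
  have meas' : AEStronglyMeasurable (fun x => c x * g' t₀ x)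
      (volume.restrict (Set.uIoc a b)) :=
    ContinuousOn.aestronglyMeasurable
      ((hc.mono hIcc).mul ((hg'.comp (Continuous.prodMk_right t₀)).continuousOn)) measurableSet_uIoc
  have hint : IntervalIntegrable (fun x => c x * g t₀ x) volume a b := by
    apply ContinuousOn.intervalIntegrable
    rw [Set.uIcc_of_le hab]
    exact hc.mul ((hg.comp (Continuous.prodMk_right t₀)).continuousOn)
  refine (intervalIntegral.hasDerivAt_integral_of_dominated_loc_of_deriv_le
    (F := fun t x => c x * g t x) (F' := fun t x => c x * g' t x)
    (bound := fun _ => Mc * Mg) (Metric.ball_mem_nhds t₀ one_pos)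
    (Filter.Eventually.of_forall meas) hint meas' ?_ intervalIntegrable_const ?_).2
  · apply Filter.Eventually.of_forall
    intro x hx s hs
    have hxI : x ∈ Set.Icc a b := hIcc hx
    simp only [Metric.mem_ball, Real.dist_eq] at hs
    have hsI : s ∈ Set.Icc (t₀-1) (t₀+1) := by
      have := abs_le.mp hs.le
      constructor <;> linarith [this.1, this.2]
    calc ‖c x * g' s x‖ = ‖c x‖ * ‖g' s x‖ := norm_mul _ _
      _ ≤ Mc * Mg := mul_le_mul (hMc x hxI) (hMg (s,x) ⟨hsI, hxI⟩) (norm_nonneg _) hMc0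
  · exact Filter.Eventually.of_forall fun x hx s hs => (hdg s x).const_mul (c x)

lemma cauchy_schwarz {f g : ℝ → ℝ} {a b : ℝ} (hab : a ≤ b)
    (hf : ContinuousOn f (Set.Icc a b)) (hg : ContinuousOn g (Set.Icc a b)) :
    (∫ x in a..b, f x * g x)^2 ≤ (∫ x in a..b, (f x)^2) * (∫ x in a..b, (g x)^2) := by
  have hI : ∀ {h : ℝ → ℝ}, ContinuousOn h (Set.Icc a b) → IntervalIntegrable h volume a b := by
    intro h hh
    apply ContinuousOn.intervalIntegrable
    rwa [Set.uIcc_of_le hab]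
  have key : ∀ lam : ℝ, 0 ≤ (∫ x in a..b, (g x)^2) * (lam * lam)
      + (2 * ∫ x in a..b, f x * g x) * lam + (∫ x in a..b, (f x)^2) := by
    intro lam
    have h0 : 0 ≤ ∫ x in a..b, (lam * g x + f x)^2 :=
      intervalIntegral.integral_nonneg hab (fun x _ => sq_nonneg _)
    have hexp : (∫ x in a..b, (lam * g x + f x)^2)
        = (lam * lam) * (∫ x in a..b, (g x)^2) + (2 * lam) * (∫ x in a..b, f x * g x)
          + (∫ x in a..b, (f x)^2) := by
      rw [intervalIntegral.integral_congr (g := fun x =>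
        (lam*lam) * (g x)^2 + (2*lam) * (f x * g x) + (f x)^2) (fun x _ => by ring)]
      rw [intervalIntegral.integral_add
        (((hI (h := fun x => (g x)^2) (hg.pow 2)).const_mul _).add
          ((hI (h := fun x => f x * g x) (hf.mul hg)).const_mul _)) (hI (h := fun x => (f x)^2) (hf.pow 2)),
        intervalIntegral.integral_add ((hI (h := fun x => (g x)^2) (hg.pow 2)).const_mul _)
          ((hI (h := fun x => f x * g x) (hf.mul hg)).const_mul _),
        intervalIntegral.integral_const_mul, intervalIntegral.integral_const_mul]
    nlinarith [h0, hexp]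
  have hdisc := discrim_le_zero key
  rw [discrim] at hdisc
  nlinarith [hdisc]

lemma young {m A d s : ℝ} (h : m^2 ≤ A*d) (hA : 0 ≤ A) (hd : 0 ≤ d) (hs : 0 < s) :
    2*|m| ≤ s*A + d/s := by
  have hds : s*(d/s) = d := mul_div_cancel₀ d hs.ne'
  have hq : 0 ≤ d/s := div_nonneg hd hs.le
  have hT : 0 ≤ s*A + d/s := by positivity
  have h2 : (2*|m|)^2 ≤ (s*A + d/s)^2 := by
    have e : (2*|m|)^2 = 4*m^2 := by rw [mul_pow, sq_abs]; norm_num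
    rw [e]
    nlinarith [sq_nonneg (s*A - d/s)]
  have := Real.sqrt_le_sqrt h2
  rwa [Real.sqrt_sq (by positivity), Real.sqrt_sq hT] at this

lemma poincare {f f' : ℝ → ℝ} {L : ℝ} (hL : 0 < L)
    (hd : ∀ x, HasDerivAt f (f' x) x) (hc : Continuous f') (h0 : f 0 = 0) :
    ∫ x in (0:ℝ)..L, (f x)^2 ≤ L^2 * ∫ x in (0:ℝ)..L, (f' x)^2 := by
  have hdf : Differentiable ℝ f := fun x => (hd x).differentiableAt
  have hcf : Continuous f := hdf.continuous
  have hI2 : IntervalIntegrable (fun y => (f' y)^2) volume 0 L := ((hc.pow 2)).intervalIntegrable _ _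
  have hIL : 0 ≤ ∫ y in (0:ℝ)..L, (f' y)^2 :=
    intervalIntegral.integral_nonneg hL.le (fun x _ => sq_nonneg _)
  have key : ∀ x ∈ Set.Icc (0:ℝ) L, (f x)^2 ≤ L * ∫ y in (0:ℝ)..L, (f' y)^2 := by
    intro x hx
    have hfi : f x = ∫ y in (0:ℝ)..x, f' y * 1 := by
      simp only [mul_one]
      rw [intervalIntegral.integral_eq_sub_of_hasDerivAt (fun y _ => hd y)
        (hc.intervalIntegrable 0 x), h0, sub_zero]
    have hcs := cauchy_schwarz (f := f') (g := fun _ => (1:ℝ)) hx.1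
      hc.continuousOn continuousOn_const
    have h1 : (∫ y in (0:ℝ)..x, ((1:ℝ))^2) = x := by simp
    have hmono : (∫ y in (0:ℝ)..x, (f' y)^2) ≤ ∫ y in (0:ℝ)..L, (f' y)^2 := by
      apply intervalIntegral.integral_mono_interval (le_refl 0) hx.1 hx.2
      · exact Filter.Eventually.of_forall (fun y => sq_nonneg _)
      · exact hI2
    have hx2 : 0 ≤ ∫ y in (0:ℝ)..x, (f' y)^2 :=
      intervalIntegral.integral_nonneg hx.1 (fun y _ => sq_nonneg _)
    rw [hfi]
    have hcs' : (∫ y in (0:ℝ)..x, f' y * 1)^2 ≤ (∫ y in (0:ℝ)..x, (f' y)^2) * x := by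
      calc (∫ y in (0:ℝ)..x, f' y * 1)^2
          ≤ (∫ y in (0:ℝ)..x, (f' y)^2) * ∫ y in (0:ℝ)..x, ((1:ℝ))^2 := hcs
        _ = (∫ y in (0:ℝ)..x, (f' y)^2) * x := by rw [h1]
    calc (∫ y in (0:ℝ)..x, f' y * 1)^2 ≤ (∫ y in (0:ℝ)..x, (f' y)^2) * x := hcs'
      _ ≤ (∫ y in (0:ℝ)..L, (f' y)^2) * L := by
          apply mul_le_mul hmono hx.2 hx.1 hIL
      _ = L * ∫ y in (0:ℝ)..L, (f' y)^2 := mul_comm _ _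
  have hIf2 : IntervalIntegrable (fun x => (f x)^2) volume 0 L :=
    (hcf.pow 2).intervalIntegrable 0 L
  have := intervalIntegral.integral_mono_on hL.le hIf2 intervalIntegrable_const key
  rw [intervalIntegral.integral_const, smul_eq_mul, sub_zero] at this
  calc (∫ x in (0:ℝ)..L, (f x)^2) ≤ L * (L * ∫ y in (0:ℝ)..L, (f' y)^2) := this
    _ = L^2 * ∫ y in (0:ℝ)..L, (f' y)^2 := by ring


lemma young_lin {x κ e : ℝ} (he : 0 < e) : κ*x ≤ (e/2)*x^2 + κ^2/(2*e) := by
  have h : (e/2)*x^2 + κ^2/(2*e) - κ*x = (e*x - κ)^2/(2*e) := by field_simp; ring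
  nlinarith [div_nonneg (sq_nonneg (e*x-κ)) (by positivity : (0:ℝ) ≤ 2*e), h]

lemma leibniz1 {a b : ℝ} (hab : a ≤ b) {g g' : ℝ → ℝ → ℝ}
    (hg : Continuous (uncurry g)) (hg' : Continuous (uncurry g'))
    (hdg : ∀ t x, HasDerivAt (fun s => g s x) (g' t x) t) (t₀ : ℝ) :
    HasDerivAt (fun t => ∫ x in a..b, g t x) (∫ x in a..b, g' t₀ x) t₀ := by
  have h := leibniz hab (c := fun _ => (1:ℝ)) continuousOn_const hg hg' hdg t₀
  simpa using h

end Beam2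

namespace Beam3
open Function Set

lemma ibp {L : ℝ} {u v u' v' : ℝ → ℝ} (hu : ∀ x, HasDerivAt u (u' x) x)
    (hv : ∀ x, HasDerivAt v (v' x) x) (hu' : Continuous u') (hv' : Continuous v')
    (h0 : u 0 = 0) (hLe : u L = 0) :
    ∫ x in (0:ℝ)..L, u x * v' x = - ∫ x in (0:ℝ)..L, u' x * v x := by
  rw [intervalIntegral.integral_mul_deriv_eq_deriv_mul (fun x _ => hu x) (fun x _ => hv x)
    (hu'.intervalIntegrable 0 L) (hv'.intervalIntegrable 0 L), h0, hLe]
  ring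

lemma split5 {a b : ℝ} {u1 u2 u3 u4 u5 : ℝ → ℝ} (c1 c2 c3 c4 c5 : ℝ)
    (h1 : IntervalIntegrable u1 volume a b) (h2 : IntervalIntegrable u2 volume a b)
    (h3 : IntervalIntegrable u3 volume a b) (h4 : IntervalIntegrable u4 volume a b)
    (h5 : IntervalIntegrable u5 volume a b) :
    ∫ x in a..b, (c1 * u1 x + c2 * u2 x + c3 * u3 x + c4 * u4 x + c5 * u5 x)
      = c1 * (∫ x in a..b, u1 x) + c2 * (∫ x in a..b, u2 x) + c3 * (∫ x in a..b, u3 x)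
        + c4 * (∫ x in a..b, u4 x) + c5 * (∫ x in a..b, u5 x) := by
  rw [intervalIntegral.integral_add (((((h1.const_mul c1).add (h2.const_mul c2)).add
      (h3.const_mul c3)).add (h4.const_mul c4))) (h5.const_mul c5),
    intervalIntegral.integral_add ((((h1.const_mul c1).add (h2.const_mul c2)).add
      (h3.const_mul c3))) (h4.const_mul c4),
    intervalIntegral.integral_add (((h1.const_mul c1).add (h2.const_mul c2)))
      (h3.const_mul c3),
    intervalIntegral.integral_add ((h1.const_mul c1)) (h2.const_mul c2),
    intervalIntegral.integral_const_mul, intervalIntegral.integral_const_mul,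
    intervalIntegral.integral_const_mul, intervalIntegral.integral_const_mul,
    intervalIntegral.integral_const_mul]

lemma split2 {a b : ℝ} {u1 u2 : ℝ → ℝ}
    (h1 : IntervalIntegrable u1 volume a b) (h2 : IntervalIntegrable u2 volume a b) :
    ∫ x in a..b, (u1 x + u2 x) = (∫ x in a..b, u1 x) + ∫ x in a..b, u2 x :=
  intervalIntegral.integral_add h1 h2

end Beam3

open Function

/-- Global-in-time energy bound for the nonlinear extensible clamped–clamped
piston-theoretic beam. -/
theorem clamped_global_bound (L D k₀ β U b₂ b₁ : ℝ) (hL : 0 < L) (hD : 0 < D)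
    (hk₀ : 0 ≤ k₀) (hβ : 0 < β) (hU : 0 ≤ U) (hb₂ : 0 < b₂)
    (p₀ : ℝ → ℝ) (hp₀ : ContinuousOn p₀ (Set.Icc 0 L))
    (w : ℝ → ℝ → ℝ) (hw : ContDiff ℝ (⊤ : ℕ∞) (Function.uncurry w))
    (heq : ∀ t ≥ (0:ℝ), ∀ x ∈ Set.Icc (0:ℝ) L,
      pt (pt w) t x + D * px (px (px (px w))) t x + k₀ * pt w t x
          + (b₁ - b₂ * ∫ y in (0:ℝ)..L, (px w t y) ^ 2) * px (px w) t x
        = p₀ x - β * (pt w t x + U * px w t x))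
    (hbc : ∀ t ≥ (0:ℝ), w t 0 = 0 ∧ px w t 0 = 0 ∧ w t L = 0 ∧ px w t L = 0) :
    ∃ C : ℝ, 0 < C ∧ ∀ t ≥ (0:ℝ),
      (∫ x in (0:ℝ)..L, (px (px w) t x) ^ 2)
        + (∫ x in (0:ℝ)..L, (pt w t x) ^ 2) ≤ C := by
  classical
  -- smoothness of all derived functions
  have hw' : ContDiff ℝ Beam.sm (uncurry w) := hw.of_le (by simp)
  have h_x := Beam.contDiff_px hw'
  have h_xx := Beam.contDiff_px h_x
  have h_x3 := Beam.contDiff_px h_xx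
  have h_x4 := Beam.contDiff_px h_x3
  have h_t := Beam.contDiff_pt hw'
  have h_tt := Beam.contDiff_pt h_t
  have h_tx := Beam.contDiff_px h_t
  have h_txx := Beam.contDiff_px h_tx
  have comm1 : pt (px w) = px (pt w) := Beam.pt_px_comm hw'
  have comm2 : pt (px (px w)) = px (px (pt w)) :=
    (Beam.pt_px_comm h_x).trans (congrArg px comm1)
  -- slice continuity
  have sl : ∀ {u : ℝ → ℝ → ℝ}, ContDiff ℝ Beam.sm (uncurry u) → ∀ t, Continuous (fun x => u t x) :=
    fun hu t => hu.continuous.comp (Continuous.prodMk_right t)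
  -- boundary values of time derivatives
  have hbw0 : ∀ t, 0 ≤ t → pt w t 0 = 0 := fun t ht =>
    Beam2.deriv_zero_on_Ici (fun s => (Beam.hasDerivAt_pt hw' s 0).differentiableAt)
      (fun s hs => (hbc s hs).1) ht
  have hbwL : ∀ t, 0 ≤ t → pt w t L = 0 := fun t ht =>
    Beam2.deriv_zero_on_Ici (fun s => (Beam.hasDerivAt_pt hw' s L).differentiableAt)
      (fun s hs => (hbc s hs).2.2.1) ht
  have hbx0 : ∀ t, 0 ≤ t → px (pt w) t 0 = 0 := by
    intro t ht
    rw [← comm1]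
    exact Beam2.deriv_zero_on_Ici (fun s => (Beam.hasDerivAt_pt h_x s 0).differentiableAt)
      (fun s hs => (hbc s hs).2.1) ht
  have hbxL : ∀ t, 0 ≤ t → px (pt w) t L = 0 := by
    intro t ht
    rw [← comm1]
    exact Beam2.deriv_zero_on_Ici (fun s => (Beam.hasDerivAt_pt h_x s L).differentiableAt)
      (fun s hs => (hbc s hs).2.2.2) ht
  -- energy quantities
  set AA : ℝ → ℝ := fun t => ∫ x in (0:ℝ)..L, (pt w t x)^2 with hAAdef
  set BB : ℝ → ℝ := fun t => ∫ x in (0:ℝ)..L, (px (px w) t x)^2 with hBBdef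
  set CC : ℝ → ℝ := fun t => ∫ x in (0:ℝ)..L, (px w t x)^2 with hCCdef
  set DD2 : ℝ → ℝ := fun t => ∫ x in (0:ℝ)..L, (w t x)^2 with hDD2def
  set MM : ℝ → ℝ := fun t => ∫ x in (0:ℝ)..L, w t x * pt w t x with hMMdef
  set PP : ℝ → ℝ := fun t => ∫ x in (0:ℝ)..L, p₀ x * w t x with hPPdef
  set PQ : ℝ := ∫ x in (0:ℝ)..L, (p₀ x)^2 with hPQdef
  -- derivative expressions
  set Ad : ℝ → ℝ := fun t => ∫ x in (0:ℝ)..L, 2 * pt w t x * pt (pt w) t x with hAd_def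
  set Bd : ℝ → ℝ := fun t => ∫ x in (0:ℝ)..L, 2 * px (px w) t x * pt (px (px w)) t x with hBd_def
  set Cd : ℝ → ℝ := fun t => ∫ x in (0:ℝ)..L, 2 * px w t x * pt (px w) t x with hCd_def
  set Dd : ℝ → ℝ := fun t => ∫ x in (0:ℝ)..L, 2 * w t x * pt w t x with hDd_def
  set Md : ℝ → ℝ := fun t => ∫ x in (0:ℝ)..L, (pt w t x * pt w t x + w t x * pt (pt w) t x)
    with hMd_def
  set Pd : ℝ → ℝ := fun t => ∫ x in (0:ℝ)..L, p₀ x * pt w t x with hPd_def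
  have hA : ∀ t, HasDerivAt AA (Ad t) t := by
    intro t
    apply Beam2.leibniz1 hL.le (g := fun t x => (pt w t x)^2)
      (g' := fun t x => 2 * pt w t x * pt (pt w) t x)
    · exact h_t.continuous.pow 2
    · exact (continuous_const.mul h_t.continuous).mul h_tt.continuous
    · intro s x
      simpa using (Beam.hasDerivAt_pt h_t s x).fun_pow 2
  have hB : ∀ t, HasDerivAt BB (Bd t) t := by
    intro t
    apply Beam2.leibniz1 hL.le (g := fun t x => (px (px w) t x)^2)
      (g' := fun t x => 2 * px (px w) t x * pt (px (px w)) t x)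
    · exact h_xx.continuous.pow 2
    · exact (continuous_const.mul h_xx.continuous).mul (Beam.contDiff_pt h_xx).continuous
    · intro s x
      simpa using (Beam.hasDerivAt_pt h_xx s x).fun_pow 2
  have hC : ∀ t, HasDerivAt CC (Cd t) t := by
    intro t
    apply Beam2.leibniz1 hL.le (g := fun t x => (px w t x)^2)
      (g' := fun t x => 2 * px w t x * pt (px w) t x)
    · exact h_x.continuous.pow 2
    · exact (continuous_const.mul h_x.continuous).mul (Beam.contDiff_pt h_x).continuous
    · intro s x
      simpa using (Beam.hasDerivAt_pt h_x s x).fun_pow 2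
  have hDq : ∀ t, HasDerivAt DD2 (Dd t) t := by
    intro t
    apply Beam2.leibniz1 hL.le (g := fun t x => (w t x)^2)
      (g' := fun t x => 2 * w t x * pt w t x)
    · exact hw'.continuous.pow 2
    · exact (continuous_const.mul hw'.continuous).mul h_t.continuous
    · intro s x
      simpa using (Beam.hasDerivAt_pt hw' s x).fun_pow 2
  have hM : ∀ t, HasDerivAt MM (Md t) t := by
    intro t
    apply Beam2.leibniz1 hL.le (g := fun t x => w t x * pt w t x)
      (g' := fun t x => (pt w t x * pt w t x + w t x * pt (pt w) t x))
    · exact hw'.continuous.mul h_t.continuous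
    · exact (h_t.continuous.mul h_t.continuous).add (hw'.continuous.mul h_tt.continuous)
    · intro s x
      exact (Beam.hasDerivAt_pt hw' s x).mul (Beam.hasDerivAt_pt h_t s x)
  have hP : ∀ t, HasDerivAt PP (Pd t) t := by
    intro t
    exact Beam2.leibniz hL.le hp₀ (g := w) (g' := pt w) hw'.continuous h_t.continuous
      (fun s x => Beam.hasDerivAt_pt hw' s x) t

  -- constants
  set ε : ℝ := min (min (β/4) 1) (D/(8*L^4)) with hεdef
  have hε : 0 < ε := lt_min (lt_min (by positivity) one_pos) (by positivity)
  have hε1 : ε ≤ β/4 := le_trans (min_le_left _ _) (min_le_left _ _)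
  have hε2 : ε ≤ 1 := le_trans (min_le_left _ _) (min_le_right _ _)
  have hε3 : ε ≤ D/(8*L^4) := min_le_right _ _
  set γ : ℝ := 1 + ε + D + L^4*(1 + ε + ε*(k₀+β)) + b₂ with hγdef
  have hγ : 0 < γ := by positivity
  set δ : ℝ := min (β/2) (min (ε*D) (ε*b₂)) with hδdef
  have hδ : 0 < δ := lt_min (by positivity) (lt_min (by positivity) (by positivity))
  set K₂ : ℝ := (β*U^2)^2/(2*(ε*b₂)) + ε*((L^4/D)*PQ) + (2*ε*b₁)^2/(2*(ε*b₂)) with hK₂def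
  set K₃ : ℝ := PQ + b₁^2/b₂ with hK₃def
  set ρ : ℝ := δ/γ with hρdef
  have hρ : 0 < ρ := div_pos hδ hγ
  set K₄ : ℝ := ρ*K₃ + K₂ with hK₄def
  set K₅ : ℝ := b₁^2/b₂ + (4*L^4/D)*PQ with hK₅def
  set VV : ℝ → ℝ := fun t => AA t + D * BB t + b₂/2 * (CC t)^2 - b₁ * CC t - 2 * PP t
    + 2*ε*MM t + ε*(k₀+β)*DD2 t with hVVdef
  set Vd : ℝ → ℝ := fun t => Ad t + D * Bd t + b₂/2 * (2 * CC t * Cd t) - b₁ * Cd t - 2 * Pd t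
    + 2*ε*Md t + ε*(k₀+β)*Dd t with hVddef
  have hC2 : ∀ t, HasDerivAt (fun t => (CC t)^2) (2 * CC t * Cd t) t := fun t => by
    simpa using (hC t).fun_pow 2
  have hV : ∀ t, HasDerivAt VV (Vd t) t := by
    intro t
    exact ((((((hA t).add ((hB t).const_mul D)).add ((hC2 t).const_mul (b₂/2))).sub
      ((hC t).const_mul b₁)).sub ((hP t).const_mul 2)).add ((hM t).const_mul (2*ε))).add
      ((hDq t).const_mul (ε*(k₀+β)))
  -- basic facts
  have hA0 : ∀ t, 0 ≤ AA t := fun t =>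
    intervalIntegral.integral_nonneg hL.le (fun x _ => sq_nonneg _)
  have hB0 : ∀ t, 0 ≤ BB t := fun t =>
    intervalIntegral.integral_nonneg hL.le (fun x _ => sq_nonneg _)
  have hC0 : ∀ t, 0 ≤ CC t := fun t =>
    intervalIntegral.integral_nonneg hL.le (fun x _ => sq_nonneg _)
  have hD0 : ∀ t, 0 ≤ DD2 t := fun t =>
    intervalIntegral.integral_nonneg hL.le (fun x _ => sq_nonneg _)
  have hPQ0 : 0 ≤ PQ := intervalIntegral.integral_nonneg hL.le (fun x _ => sq_nonneg _)
  have hpoin1 : ∀ t, 0 ≤ t → CC t ≤ L^2 * BB t := fun t ht =>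
    Beam2.poincare hL (fun x => Beam.hasDerivAt_px h_x t x) (sl h_xx t) ((hbc t ht).2.1)
  have hpoin2 : ∀ t, 0 ≤ t → DD2 t ≤ L^2 * CC t := fun t ht =>
    Beam2.poincare hL (fun x => Beam.hasDerivAt_px hw' t x) (sl h_x t) ((hbc t ht).1)
  have hD4 : ∀ t, 0 ≤ t → DD2 t ≤ L^4*BB t := by
    intro t ht
    have hh := mul_le_mul_of_nonneg_left (hpoin1 t ht) (sq_nonneg L)
    nlinarith only [hh, hpoin2 t ht]
  have hcsM : ∀ t, (MM t)^2 ≤ DD2 t * AA t := fun t =>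
    Beam2.cauchy_schwarz hL.le (sl hw' t).continuousOn (sl h_t t).continuousOn
  have hcsP : ∀ t, (PP t)^2 ≤ PQ * DD2 t := fun t =>
    Beam2.cauchy_schwarz hL.le hp₀ (sl hw' t).continuousOn
  clear_value AA BB CC DD2 MM PP PQ Ad Bd Cd Dd Md Pd ε γ δ K₂ K₃ ρ K₄ K₅ VV Vd
  -- integrability helpers
  have II : ∀ (f : ℝ → ℝ), Continuous f → IntervalIntegrable f volume 0 L :=
    fun f hf => hf.intervalIntegrable 0 L
  have IIp : ∀ (f : ℝ → ℝ), Continuous f → IntervalIntegrable (fun x => p₀ x * f x) volume 0 L := by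
    intro f hf
    apply ContinuousOn.intervalIntegrable
    rw [Set.uIcc_of_le hL.le]
    exact hp₀.mul hf.continuousOn
  have hkβ : (0:ℝ) ≤ k₀ + β := by linarith only [hk₀, hβ]
  have hLε : 0 ≤ L^4*(1 + ε + ε*(k₀+β)) :=
    mul_nonneg (pow_nonneg hL.le 4)
      (by nlinarith only [hε, mul_nonneg hε.le hkβ])
  -- the key differential inequality
  have key : ∀ t, 0 < t → Vd t ≤ -ρ * VV t + K₄ := by
    intro t htpos
    have ht0 : (0:ℝ) ≤ t := htpos.le
    set q : ℝ := ∫ x in (0:ℝ)..L, pt w t x * px (px w) t x with hqdef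
    set r : ℝ := ∫ x in (0:ℝ)..L, pt w t x * px w t x with hrdef
    set s : ℝ := ∫ x in (0:ℝ)..L, pt w t x * px (px (px (px w))) t x with hsdef
    clear_value q r s
    have hPDE : ∀ x ∈ Set.Icc (0:ℝ) L, pt (pt w) t x
        = p₀ x - (k₀+β) * pt w t x - β*U*px w t x - D * px (px (px (px w))) t x
          - (b₁ - b₂ * CC t) * px (px w) t x := by
      intro x hx
      have h := heq t ht0 x hx
      have hCC : (∫ y in (0:ℝ)..L, (px w t y)^2) = CC t := by rw [hCCdef]
      rw [hCC] at h
      linarith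
    have hAd_t : Ad t = 2 * Pd t + (-(2*(k₀+β))) * AA t + (-(2*β*U)) * r + (-(2*D)) * s
        + (-(2*(b₁ - b₂ * CC t))) * q := by
      have hcong : Set.EqOn (fun x => 2 * pt w t x * pt (pt w) t x)
          (fun x => 2 * (p₀ x * pt w t x) + (-(2*(k₀+β))) * (pt w t x)^2
            + (-(2*β*U)) * (pt w t x * px w t x)
            + (-(2*D)) * (pt w t x * px (px (px (px w))) t x)
            + (-(2*(b₁ - b₂ * CC t))) * (pt w t x * px (px w) t x)) (Set.uIcc (0:ℝ) L) := by
        intro x hx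
        have hx' : x ∈ Set.Icc (0:ℝ) L := by rwa [Set.uIcc_of_le hL.le] at hx
        simp only
        rw [hPDE x hx']
        ring
      have h1 : Ad t = ∫ x in (0:ℝ)..L, (2 * (p₀ x * pt w t x) + (-(2*(k₀+β))) * (pt w t x)^2
          + (-(2*β*U)) * (pt w t x * px w t x)
          + (-(2*D)) * (pt w t x * px (px (px (px w))) t x)
          + (-(2*(b₁ - b₂ * CC t))) * (pt w t x * px (px w) t x)) := by
        simp only [hAd_def]
        exact intervalIntegral.integral_congr hcong
      rw [h1, Beam3.split5 2 (-(2*(k₀+β))) (-(2*β*U)) (-(2*D)) (-(2*(b₁ - b₂*CC t)))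
        (IIp _ (sl h_t t)) (II (fun x => (pt w t x)^2) ((sl h_t t).pow 2))
        (II (fun x => pt w t x * px w t x) ((sl h_t t).mul (sl h_x t)))
        (II (fun x => pt w t x * px (px (px (px w))) t x) ((sl h_t t).mul (sl h_x4 t)))
        (II (fun x => pt w t x * px (px w) t x) ((sl h_t t).mul (sl h_xx t)))]
      simp only [hPd_def, hAAdef, hqdef, hrdef, hsdef]
    have hBd_t : Bd t = 2 * s := by
      have i1 : s = - ∫ x in (0:ℝ)..L, px (pt w) t x * px (px (px w)) t x := by
        simp only [hsdef]
        exact Beam3.ibp (fun x => Beam.hasDerivAt_px h_t t x)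
          (fun x => Beam.hasDerivAt_px h_x3 t x)
          (sl h_tx t) (sl h_x4 t) (hbw0 t ht0) (hbwL t ht0)
      have i2 : (∫ x in (0:ℝ)..L, px (pt w) t x * px (px (px w)) t x)
          = - ∫ x in (0:ℝ)..L, px (px (pt w)) t x * px (px w) t x :=
        Beam3.ibp (fun x => Beam.hasDerivAt_px h_tx t x)
          (fun x => Beam.hasDerivAt_px h_xx t x)
          (sl h_txx t) (sl h_x3 t) (hbx0 t ht0) (hbxL t ht0)
      have i3 : Bd t = ∫ x in (0:ℝ)..L, 2 * (px (px (pt w)) t x * px (px w) t x) := by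
        simp only [hBd_def, comm2]
        exact intervalIntegral.integral_congr (fun x _ => by ring)
      have i4 : Bd t = 2 * ∫ x in (0:ℝ)..L, px (px (pt w)) t x * px (px w) t x := by
        rw [i3, intervalIntegral.integral_const_mul]
      linarith [i1, i2, i4]
    have hCd_t : Cd t = -2 * q := by
      have i1 : (∫ x in (0:ℝ)..L, px w t x * px (pt w) t x)
          = - ∫ x in (0:ℝ)..L, px (px w) t x * pt w t x :=
        Beam3.ibp (fun x => Beam.hasDerivAt_px h_x t x)
          (fun x => Beam.hasDerivAt_px h_t t x)
          (sl h_xx t) (sl h_tx t) ((hbc t ht0).2.1) ((hbc t ht0).2.2.2)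
      have i2 : (∫ x in (0:ℝ)..L, px (px w) t x * pt w t x) = q := by
        simp only [hqdef]
        exact intervalIntegral.integral_congr (fun x _ => mul_comm _ _)
      have i3 : Cd t = 2 * ∫ x in (0:ℝ)..L, px w t x * px (pt w) t x := by
        simp only [hCd_def, comm1]
        rw [intervalIntegral.integral_congr
          (g := fun x => 2 * (px w t x * px (pt w) t x)) (fun x _ => by ring),
          intervalIntegral.integral_const_mul]
      rw [i3, i1, i2]
      ring
    have hDd_t : Dd t = 2 * MM t := by
      simp only [hDd_def, hMMdef]
      rw [intervalIntegral.integral_congr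
        (g := fun x => 2 * (w t x * pt w t x)) (fun x _ => by ring),
        intervalIntegral.integral_const_mul]
    have hMd_t : Md t = AA t + (PP t - (k₀+β)*MM t - D*BB t + (b₁ - b₂*CC t)*CC t) := by
      have j0 : Md t = (∫ x in (0:ℝ)..L, pt w t x * pt w t x)
          + ∫ x in (0:ℝ)..L, w t x * pt (pt w) t x := by
        simp only [hMd_def]
        exact Beam3.split2 (II _ ((sl h_t t).mul (sl h_t t))) (II _ ((sl hw' t).mul (sl h_tt t)))
      have j1 : (∫ x in (0:ℝ)..L, pt w t x * pt w t x) = AA t := by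
        simp only [hAAdef]
        exact intervalIntegral.integral_congr (fun x _ => (pow_two _).symm)
      have j2 : (∫ x in (0:ℝ)..L, w t x * pt (pt w) t x)
          = 1*(PP t) + (-(k₀+β))*MM t + (-(β*U))*(∫ x in (0:ℝ)..L, w t x * px w t x)
            + (-D)*(∫ x in (0:ℝ)..L, w t x * px (px (px (px w))) t x)
            + (-(b₁ - b₂*CC t))*(∫ x in (0:ℝ)..L, w t x * px (px w) t x) := by
        have hcong : Set.EqOn (fun x => w t x * pt (pt w) t x)
            (fun x => 1*(p₀ x * w t x) + (-(k₀+β))*(w t x * pt w t x)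
              + (-(β*U))*(w t x * px w t x)
              + (-D)*(w t x * px (px (px (px w))) t x)
              + (-(b₁ - b₂*CC t))*(w t x * px (px w) t x)) (Set.uIcc (0:ℝ) L) := by
          intro x hx
          have hx' : x ∈ Set.Icc (0:ℝ) L := by rwa [Set.uIcc_of_le hL.le] at hx
          simp only
          rw [hPDE x hx']
          ring
        rw [intervalIntegral.integral_congr hcong, Beam3.split5 _ _ _ _ _
          (IIp _ (sl hw' t)) (II (fun x => w t x * pt w t x) ((sl hw' t).mul (sl h_t t)))
          (II (fun x => w t x * px w t x) ((sl hw' t).mul (sl h_x t)))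
          (II (fun x => w t x * px (px (px (px w))) t x) ((sl hw' t).mul (sl h_x4 t)))
          (II (fun x => w t x * px (px w) t x) ((sl hw' t).mul (sl h_xx t)))]
        simp only [hPPdef, hMMdef]
      have k1 : (∫ x in (0:ℝ)..L, w t x * px w t x) = 0 := by
        have i1 : (∫ x in (0:ℝ)..L, w t x * px w t x)
            = - ∫ x in (0:ℝ)..L, px w t x * w t x :=
          Beam3.ibp (fun x => Beam.hasDerivAt_px hw' t x) (fun x => Beam.hasDerivAt_px hw' t x)
            (sl h_x t) (sl h_x t) ((hbc t ht0).1) ((hbc t ht0).2.2.1)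
        have i2 : (∫ x in (0:ℝ)..L, px w t x * w t x) = ∫ x in (0:ℝ)..L, w t x * px w t x :=
          intervalIntegral.integral_congr (fun x _ => mul_comm _ _)
        linarith [i1, i2]
      have k2 : (∫ x in (0:ℝ)..L, w t x * px (px (px (px w))) t x) = BB t := by
        have i1 : (∫ x in (0:ℝ)..L, w t x * px (px (px (px w))) t x)
            = - ∫ x in (0:ℝ)..L, px w t x * px (px (px w)) t x :=
          Beam3.ibp (fun x => Beam.hasDerivAt_px hw' t x) (fun x => Beam.hasDerivAt_px h_x3 t x)
            (sl h_x t) (sl h_x4 t) ((hbc t ht0).1) ((hbc t ht0).2.2.1)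
        have i2 : (∫ x in (0:ℝ)..L, px w t x * px (px (px w)) t x)
            = - ∫ x in (0:ℝ)..L, px (px w) t x * px (px w) t x :=
          Beam3.ibp (fun x => Beam.hasDerivAt_px h_x t x) (fun x => Beam.hasDerivAt_px h_xx t x)
            (sl h_xx t) (sl h_x3 t) ((hbc t ht0).2.1) ((hbc t ht0).2.2.2)
        have i3 : (∫ x in (0:ℝ)..L, px (px w) t x * px (px w) t x) = BB t := by
          simp only [hBBdef]
          exact intervalIntegral.integral_congr (fun x _ => (pow_two _).symm)
        linarith [i1, i2, i3]
      have k3 : (∫ x in (0:ℝ)..L, w t x * px (px w) t x) = - CC t := by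
        have i1 : (∫ x in (0:ℝ)..L, w t x * px (px w) t x)
            = - ∫ x in (0:ℝ)..L, px w t x * px w t x :=
          Beam3.ibp (fun x => Beam.hasDerivAt_px hw' t x) (fun x => Beam.hasDerivAt_px h_x t x)
            (sl h_x t) (sl h_xx t) ((hbc t ht0).1) ((hbc t ht0).2.2.1)
        have i2 : (∫ x in (0:ℝ)..L, px w t x * px w t x) = CC t := by
          simp only [hCCdef]
          exact intervalIntegral.integral_congr (fun x _ => (pow_two _).symm)
        linarith [i1, i2]
      rw [j0, j1, j2, k1, k2, k3]
      ring
    have hVd_eq : Vd t = -(2*(k₀+β))*AA t - (2*β*U)*r + 2*ε*AA t + 2*ε*PP t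
        - 2*ε*D*BB t + 2*ε*((b₁ - b₂*CC t)*CC t) := by
      simp only [hVddef]
      rw [hAd_t, hBd_t, hCd_t, hDd_t, hMd_t]
      ring
    -- Young-type estimates
    have hr2 : r^2 ≤ AA t * CC t := by
      simp only [hrdef, hAAdef, hCCdef]
      exact Beam2.cauchy_schwarz hL.le (sl h_t t).continuousOn (sl h_x t).continuousOn
    have hUr : (U*r)^2 ≤ AA t * (U^2 * CC t) := by
      have := mul_le_mul_of_nonneg_left hr2 (sq_nonneg U)
      nlinarith only [this]
    have hy1 : -((2*β*U)*r) ≤ β*AA t + β*(U^2*CC t) := by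
      have h2 := Beam2.young hUr (hA0 t) (mul_nonneg (sq_nonneg U) (hC0 t)) one_pos
      have h2' : 2*|U*r| ≤ AA t + U^2*CC t := by
        rw [one_mul, div_one] at h2
        exact h2
      have h3 : -(2*(U*r)) ≤ 2*|U*r| := by linarith only [neg_le_abs (U*r)]
      linarith only [mul_le_mul_of_nonneg_left (h3.trans h2') hβ.le]
    have hy1b : β*(U^2*CC t) ≤ (ε*b₂/2)*(CC t)^2 + (β*U^2)^2/(2*(ε*b₂)) := by
      have h := Beam2.young_lin (x := CC t) (κ := β*U^2) (e := ε*b₂) (mul_pos hε hb₂)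
      linarith only [h]
    have hy3 : (2*ε*b₁)*CC t ≤ (ε*b₂/2)*(CC t)^2 + (2*ε*b₁)^2/(2*(ε*b₂)) :=
      Beam2.young_lin (mul_pos hε hb₂)
    have hp2 : (PP t)^2 ≤ PQ * DD2 t := hcsP t
    have hy2' := Beam2.young hp2 hPQ0 (hD0 t) (show (0:ℝ) < L^4/D by positivity)
    have hy2 : 2*ε*PP t ≤ ε*D*BB t + ε*((L^4/D)*PQ) := by
      have e1 : DD2 t/(L^4/D) = D*DD2 t/L^4 := by
        field_simp
      have e2 : D*DD2 t/L^4 ≤ D*BB t := by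
        rw [div_le_iff₀ (by positivity : (0:ℝ) < L^4)]
        nlinarith only [mul_le_mul_of_nonneg_left (hD4 t ht0) hD.le]
      have e3 : PP t ≤ |PP t| := le_abs_self _
      rw [e1] at hy2'
      have e4 : 2*|PP t| ≤ (L^4/D)*PQ + D*BB t := by linarith only [hy2', e2]
      linarith only [mul_le_mul_of_nonneg_left e4 hε.le,
        mul_le_mul_of_nonneg_left e3 (by linarith only [hε] : (0:ℝ) ≤ 2*ε)]
    have hcoefA : (-(2*(k₀+β)) + 2*ε + β)*AA t ≤ -(β/2)*AA t := by
      apply mul_le_mul_of_nonneg_right _ (hA0 t)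
      linarith only [hε1, hk₀]
    have hstep1 : Vd t ≤ -(β/2)*AA t - ε*D*BB t - ε*b₂*(CC t)^2 + K₂ := by
      linarith only [hVd_eq, hy1, hy1b, hy3, hy2, hcoefA, hK₂def]
    have hδ1 : δ ≤ β/2 := by rw [hδdef]; exact min_le_left _ _
    have hδ2 : δ ≤ ε*D := by rw [hδdef]; exact (min_le_right _ _).trans (min_le_left _ _)
    have hδ3 : δ ≤ ε*b₂ := by rw [hδdef]; exact (min_le_right _ _).trans (min_le_right _ _)
    have hδA : δ*(AA t) ≤ (β/2)*AA t := mul_le_mul_of_nonneg_right hδ1 (hA0 t)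
    have hδB : δ*(BB t) ≤ ε*D*BB t := mul_le_mul_of_nonneg_right hδ2 (hB0 t)
    have hδC : δ*((CC t)^2) ≤ ε*b₂*(CC t)^2 := mul_le_mul_of_nonneg_right hδ3 (sq_nonneg _)
    have hstep2 : Vd t ≤ -(δ*(AA t + BB t + (CC t)^2)) + K₂ := by
      linarith only [hstep1, hδA, hδB, hδC]
    -- upper bound on VV t
    have hyM := Beam2.young (hcsM t) (hD0 t) (hA0 t) one_pos
    have hyP := Beam2.young hp2 hPQ0 (hD0 t) one_pos
    have hub1 : -b₁*CC t ≤ (b₂/4)*(CC t)^2 + b₁^2/b₂ := by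
      have h := Beam2.young_lin (x := CC t) (κ := -b₁) (e := b₂/2) (by positivity)
      have e : ((b₂/2)/2)*(CC t)^2 + (-b₁)^2/(2*(b₂/2)) = (b₂/4)*(CC t)^2 + b₁^2/b₂ := by
        ring
      linarith only [h, e]
    have hub2 : -(2*PP t) ≤ PQ + L^4*BB t := by
      rw [one_mul, div_one] at hyP
      have e3 : -PP t ≤ |PP t| := neg_le_abs _
      linarith only [hyP, hD4 t ht0, e3]
    have hub3 : 2*ε*MM t ≤ ε*AA t + ε*(L^4*BB t) := by
      rw [one_mul, div_one] at hyM
      have e3 : MM t ≤ |MM t| := le_abs_self _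
      linarith only [mul_le_mul_of_nonneg_left hyM hε.le,
        mul_le_mul_of_nonneg_left e3 (by linarith only [hε] : (0:ℝ) ≤ 2*ε),
        mul_le_mul_of_nonneg_left (hD4 t ht0) hε.le]
    have hub4 : ε*(k₀+β)*DD2 t ≤ ε*(k₀+β)*(L^4*BB t) :=
      mul_le_mul_of_nonneg_left (hD4 t ht0) (mul_nonneg hε.le (by linarith))
    have hgA : (1+ε)*AA t ≤ γ*AA t := by
      apply mul_le_mul_of_nonneg_right _ (hA0 t)
      have h1 : 0 ≤ L^4*(1 + ε + ε*(k₀+β)) := hLε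
      rw [hγdef]
      linarith only [hD.le, hb₂.le, h1, hε]
    have hgB : (D + L^4 + ε*L^4 + ε*(k₀+β)*L^4)*BB t ≤ γ*BB t := by
      apply mul_le_mul_of_nonneg_right _ (hB0 t)
      rw [hγdef]
      linarith only [hε.le, hb₂.le]
    have hgC : (3*b₂/4)*(CC t)^2 ≤ γ*(CC t)^2 := by
      apply mul_le_mul_of_nonneg_right _ (sq_nonneg _)
      rw [hγdef]
      linarith only [hε.le, hD.le, hb₂.le, hLε]
    have hVVub : VV t ≤ γ*(AA t + BB t + (CC t)^2) + K₃ := by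
      have hVVt : VV t = AA t + D * BB t + b₂/2 * (CC t)^2 - b₁ * CC t - 2 * PP t
          + 2*ε*MM t + ε*(k₀+β)*DD2 t := by rw [hVVdef]
      linarith only [hVVt, hub1, hub2, hub3, hub4, hgA, hgB, hgC, hK₃def]
    have h8 : (VV t - K₃)/γ ≤ AA t + BB t + (CC t)^2 := by
      rw [div_le_iff₀ hγ]
      nlinarith only [hVVub]
    have h9 : -(δ*(AA t + BB t + (CC t)^2)) ≤ -(δ*((VV t - K₃)/γ)) :=
      neg_le_neg (mul_le_mul_of_nonneg_left h8 hδ.le)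
    have h10 : -(δ*((VV t - K₃)/γ)) = -ρ*VV t + ρ*K₃ := by
      rw [hρdef]
      field_simp
      ring
    rw [hK₄def]
    linarith only [hstep2, h9, h10]
  -- Gronwall / monotonicity argument
  have hdV : Differentiable ℝ VV := fun t => (hV t).differentiableAt
  set W : ℝ → ℝ := fun u => (VV u - K₄/ρ) * Real.exp (ρ*u) with hWdef
  have hWd : ∀ u, HasDerivAt W (Vd u * Real.exp (ρ*u) + (VV u - K₄/ρ) * (Real.exp (ρ*u) * ρ)) u := by
    intro u
    have h1 : HasDerivAt (fun u => VV u - K₄/ρ) (Vd u) u := (hV u).sub_const _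
    have h2 : HasDerivAt (fun u => Real.exp (ρ*u)) (Real.exp (ρ*u) * ρ) u := by
      simpa using ((hasDerivAt_id u).const_mul ρ).exp
    exact h1.mul h2
  have hanti : AntitoneOn W (Set.Ici 0) := by
    apply antitoneOn_of_deriv_nonpos (convex_Ici 0)
    · exact ((hdV.continuous.sub continuous_const).mul
        (Real.continuous_exp.comp (continuous_const.mul continuous_id))).continuousOn
    · intro x hx
      exact (hWd x).differentiableAt.differentiableWithinAt
    · intro x hx
      rw [interior_Ici] at hx
      rw [(hWd x).deriv]
      have hk := key x hx
      have he : (0:ℝ) < Real.exp (ρ*x) := Real.exp_pos _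
      have hKρ : ρ*(K₄/ρ) = K₄ := mul_div_cancel₀ _ hρ.ne'
      have h1 : Vd x + ρ*(VV x - K₄/ρ) ≤ 0 := by nlinarith only [hk, hKρ]
      nlinarith only [mul_le_mul_of_nonneg_right h1 he.le]
  set Smax : ℝ := max (VV 0) (K₄/ρ) with hSdef
  have gron : ∀ t, 0 ≤ t → VV t ≤ Smax := by
    intro t ht
    have hW0 : W t ≤ W 0 := hanti Set.self_mem_Ici ht ht
    have hW0v : W 0 = VV 0 - K₄/ρ := by
      rw [hWdef]
      simp
    have hWt : W t = (VV t - K₄/ρ) * Real.exp (ρ*t) := by rw [hWdef]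
    have hexp1 : 1 ≤ Real.exp (ρ*t) := Real.one_le_exp (by positivity)
    rcases le_or_gt (VV t) (K₄/ρ) with h | h
    · exact h.trans (le_max_right _ _)
    · have h2 : VV t - K₄/ρ ≤ (VV t - K₄/ρ)*Real.exp (ρ*t) := by
        nlinarith only [hexp1, h]
      rw [hWt, hW0v] at hW0
      have h3 : VV t ≤ VV 0 := by linarith only [hW0, h2]
      exact h3.trans (le_max_left _ _)
  -- lower bound of VV by the energy
  have lower : ∀ t, 0 ≤ t →
      AA t + BB t ≤ (2 + 4/D)*(VV t + K₅) ∧ 0 ≤ VV t + K₅ := by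
    intro t ht
    have hVVt : VV t = AA t + D * BB t + b₂/2 * (CC t)^2 - b₁ * CC t - 2 * PP t
        + 2*ε*MM t + ε*(k₀+β)*DD2 t := by rw [hVVdef]
    have hub1 : b₁*CC t ≤ (b₂/4)*(CC t)^2 + b₁^2/b₂ := by
      have h := Beam2.young_lin (x := CC t) (κ := b₁) (e := b₂/2) (by positivity)
      have e : ((b₂/2)/2)*(CC t)^2 + b₁^2/(2*(b₂/2)) = (b₂/4)*(CC t)^2 + b₁^2/b₂ := by ring
      linarith only [h, e]
    have hyP := Beam2.young (hcsP t) hPQ0 (hD0 t) (show (0:ℝ) < 4*L^4/D by positivity)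
    have e1 : DD2 t/(4*L^4/D) = D*DD2 t/(4*L^4) := by
      field_simp
    have e2 : D*DD2 t/(4*L^4) ≤ (D/4)*BB t := by
      rw [div_le_iff₀ (by positivity : (0:ℝ) < 4*L^4)]
      nlinarith only [mul_le_mul_of_nonneg_left (hD4 t ht) hD.le]
    have hPup : 2*PP t ≤ (4*L^4/D)*PQ + (D/4)*BB t := by
      rw [e1] at hyP
      linarith only [hyP, e2, le_abs_self (PP t)]
    have hmm2 : (2*ε*MM t)^2 ≤ AA t * (4*ε^2*DD2 t) := by
      have h := mul_le_mul_of_nonneg_left (hcsM t) (by positivity : (0:ℝ) ≤ 4*ε^2)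
      nlinarith only [h]
    have hyM := Beam2.young hmm2 (hA0 t)
      (mul_nonneg (by positivity) (hD0 t)) (show (0:ℝ) < 1/2 by norm_num)
    have k1 : -(2*ε*MM t) ≤ AA t/4 + 4*ε^2*DD2 t := by
      have h3 : (4*ε^2*DD2 t)/(1/2) = 8*ε^2*DD2 t := by ring
      rw [h3] at hyM
      linarith only [hyM, neg_le_abs (2*ε*MM t)]
    have hε2' : ε^2 ≤ D/(8*L^4) := by nlinarith only [hε3, hε2, hε.le]
    have k2 : 4*ε^2*DD2 t ≤ (D/2)*BB t := by
      have h4 : ε^2*(8*L^4) ≤ D := (le_div_iff₀ (by positivity : (0:ℝ) < 8*L^4)).mp hε2'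
      have h5 := mul_le_mul_of_nonneg_left (hD4 t ht) (by positivity : (0:ℝ) ≤ 4*ε^2)
      have h6 := mul_le_mul_of_nonneg_right h4 (hB0 t)
      nlinarith only [h5, h6, hB0 t]
    have hDD2nn : 0 ≤ ε*(k₀+β)*DD2 t := mul_nonneg (mul_nonneg hε.le hkβ) (hD0 t)
    have hVlow : (3/4)*AA t + (D/4)*BB t ≤ VV t + K₅ := by
      have hb2cc : 0 ≤ (b₂/4)*(CC t)^2 := by positivity
      linarith only [hVVt, hub1, hPup, k1, k2, hDD2nn, hb2cc, hK₅def]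
    have hpos : 0 ≤ VV t + K₅ := by
      nlinarith only [hVlow, hA0 t, hB0 t, hD.le, mul_nonneg hD.le (hB0 t)]
    constructor
    · have hA_bd : AA t ≤ 2*(VV t + K₅) := by
        nlinarith only [hVlow, hpos, hB0 t, mul_nonneg hD.le (hB0 t)]
      have hB_bd : BB t ≤ (4/D)*(VV t + K₅) := by
        rw [show (4/D)*(VV t + K₅) = 4*(VV t + K₅)/D from by ring, le_div_iff₀ hD]
        nlinarith only [hVlow, hA0 t]
      nlinarith only [hA_bd, hB_bd]
    · exact hpos
  -- conclusion
  refine ⟨(2 + 4/D)*(Smax + K₅) + 1, ?_, ?_⟩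
  · have h0 := (lower 0 le_rfl).2
    have h1 : VV 0 ≤ Smax := le_max_left _ _
    have h2 : (0:ℝ) ≤ 2 + 4/D := by positivity
    nlinarith only [h0, h1, h2, mul_le_mul_of_nonneg_left
      (show VV 0 + K₅ ≤ Smax + K₅ from by linarith only [h1]) h2]
  · intro t ht
    have h1 := (lower t ht).1
    have h2 := gron t ht
    have h3 : (2 + 4/D)*(VV t + K₅) ≤ (2 + 4/D)*(Smax + K₅) :=
      mul_le_mul_of_nonneg_left (by linarith only [h2]) (by positivity)
    have hgoal : BB t + AA t ≤ (2 + 4/D)*(Smax + K₅) + 1 := by linarith only [h1, h3]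
    have eB : (∫ x in (0:ℝ)..L, (px (px w) t x) ^ 2) = BB t := by rw [hBBdef]
    have eA : (∫ x in (0:ℝ)..L, (pt w t x) ^ 2) = AA t := by rw [hAAdef]
    rw [eB, eA]
    exact hgoal
end
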